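/- arXiv:1807.06831 — 11 statements merged into one kernel-verified Lean document; each statement's English description precedes it below -/
import Mathlib

section
/- For every a > 0 and b ∈ (0,1) there exists a closed interval I ⊂ (0,1) such that f_{a,b}(I) ⊆ I and for every x ∈ (0,1) there exists n ≥ 0 with f_{a,b}^n(x) ∈ I. -/
/-!
In the logit coordinate `x = sigmoid y` the map becomes `y ↦ y - a (sigmoid y - b)`, a step of
length less than `a` towards the fixed point `s = logit b`. Hence `[s - a, s + a]` is invariant,
and outside it every step moves towards `s` by at least a fixed `δ > 0` without jumping past the
interval, so every orbit enters it. Pulling back by `sigmoid` gives the interval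
`[sigmoid (s - a), sigmoid (s + a)] ⊂ (0, 1)`.
-/

/-- The map `f_{a,b}(x) = x / (x + (1-x) * exp (a (x - b)))`. -/
noncomputable def chaosMap (a b : ℝ) : ℝ → ℝ :=
  fun x => x / (x + (1 - x) * Real.exp (a * (x - b)))

open Real Set Function

theorem exists_iterate_mem_Icc_of_step {F : ℝ → ℝ} {l u δ : ℝ} (hδ : 0 < δ)
    (hdown : ∀ y, u < y → l ≤ F y ∧ F y ≤ y - δ)
    (hup : ∀ y, y < l → F y ≤ u ∧ y + δ ≤ F y) (y : ℝ) :
    ∃ n, F^[n] y ∈ Icc l u := by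
  have hbounded : ∀ k : ℕ, ∀ y, l - k * δ ≤ y → y ≤ u + k * δ → ∃ n, F^[n] y ∈ Icc l u := by
    intro k
    induction k with
    | zero => exact fun y hl hu ↦ ⟨0, by simpa using hl, by simpa using hu⟩
    | succ k ih =>
      intro y hl hu
      by_cases hy : y ∈ Icc l u
      · exact ⟨0, hy⟩
      suffices l - k * δ ≤ F y ∧ F y ≤ u + k * δ by
        obtain ⟨n, hn⟩ := ih _ this.1 this.2
        exact ⟨n + 1, hn⟩
      push_cast at hl hu
      have hkδ : 0 ≤ k * δ := by positivity
      rcases lt_or_ge u y with hyu | hyu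
      · obtain ⟨h₁, h₂⟩ := hdown y hyu
        constructor <;> linarith
      · have hyl : y < l := not_le.1 fun hly ↦ hy ⟨hly, hyu⟩
        obtain ⟨h₁, h₂⟩ := hup y hyl
        constructor <;> linarith
  obtain ⟨k, hk⟩ := exists_nat_ge (max (l - y) (y - u) / δ)
  rw [div_le_iff₀ hδ] at hk
  exact hbounded k y (by linarith [le_max_left (l - y) (y - u)])
    (by linarith [le_max_right (l - y) (y - u)])

theorem Real.image_sigmoid_Icc (l u : ℝ) : sigmoid '' Icc l u = Icc (sigmoid l) (sigmoid u) := by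
  ext x
  constructor
  · rintro ⟨y, hy, rfl⟩
    exact ⟨sigmoid_le hy.1, sigmoid_le hy.2⟩
  · intro hx
    obtain ⟨y, rfl⟩ : x ∈ range sigmoid :=
      range_sigmoid ▸ ⟨(sigmoid_pos l).trans_le hx.1, hx.2.trans_lt (sigmoid_lt_one u)⟩
    exact ⟨y, ⟨sigmoid_le_iff.1 hx.1, sigmoid_le_iff.1 hx.2⟩, rfl⟩

noncomputable def logitChaosMap (a b : ℝ) (y : ℝ) : ℝ := y - a * (sigmoid y - b)

theorem semiconj_sigmoid_logitChaosMap (a b : ℝ) :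
    Semiconj sigmoid (logitChaosMap a b) (chaosMap a b) := by
  intro y
  have hexp : exp (-y) = (1 - sigmoid y) / sigmoid y := by
    rw [eq_div_iff (sigmoid_pos y).ne', mul_comm, sigmoid_mul_rexp_neg, sigmoid_neg]
  have hp := sigmoid_pos y
  have hden : 0 < sigmoid y + (1 - sigmoid y) * exp (a * (sigmoid y - b)) :=
    add_pos_of_pos_of_nonneg hp (mul_nonneg (sub_nonneg.2 (sigmoid_le_one y)) (exp_pos _).le)
  rw [chaosMap, logitChaosMap, sigmoid_def, neg_sub', sub_neg_eq_add, exp_add, hexp]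
  field_simp

section LogitChaosMap

variable {a b s : ℝ}

theorem mapsTo_logitChaosMap_Icc (ha : 0 ≤ a) (hs : sigmoid s = b) :
    MapsTo (logitChaosMap a b) (Icc (s - a) (s + a)) (Icc (s - a) (s + a)) := by
  rintro y ⟨hl, hu⟩
  subst hs
  have := sigmoid_pos y
  have := sigmoid_lt_one y
  have := sigmoid_pos s
  have := sigmoid_lt_one s
  rcases le_total y s with hys | hsy
  · have := sigmoid_le hys
    constructor <;> simp only [logitChaosMap] <;> nlinarith
  · have := sigmoid_le hsy
    constructor <;> simp only [logitChaosMap] <;> nlinarith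

theorem exists_iterate_logitChaosMap_mem_Icc (ha : 0 < a) (hs : sigmoid s = b) (y : ℝ) :
    ∃ n, (logitChaosMap a b)^[n] y ∈ Icc (s - a) (s + a) := by
  subst hs
  set m := min (sigmoid (s + a) - sigmoid s) (sigmoid s - sigmoid (s - a))
  have hm : 0 < m := lt_min (sub_pos.2 (sigmoid_lt (by linarith)))
    (sub_pos.2 (sigmoid_lt (by linarith)))
  refine exists_iterate_mem_Icc_of_step (mul_pos ha hm) (fun y hy ↦ ?_) (fun y hy ↦ ?_) y
  · have := sigmoid_lt hy
    have := sigmoid_lt_one y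
    have := sigmoid_pos s
    have := min_le_left (sigmoid (s + a) - sigmoid s) (sigmoid s - sigmoid (s - a))
    constructor <;> simp only [logitChaosMap] <;> nlinarith
  · have := sigmoid_lt hy
    have := sigmoid_pos y
    have := sigmoid_lt_one s
    have := min_le_right (sigmoid (s + a) - sigmoid s) (sigmoid s - sigmoid (s - a))
    constructor <;> simp only [logitChaosMap] <;> nlinarith

end LogitChaosMap

/-- For every `a > 0` and `b ∈ (0,1)` there exists a closed interval
`I = [c,d] ⊂ (0,1)` such that `f_{a,b}(I) ⊆ I` and the trajectory of every
point of `(0,1)` enters `I`. -/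
theorem stmt_0 (a b : ℝ) (ha : 0 < a) (hb : b ∈ Set.Ioo (0 : ℝ) 1) :
    ∃ c d : ℝ, 0 < c ∧ c ≤ d ∧ d < 1 ∧
      Set.MapsTo (chaosMap a b) (Set.Icc c d) (Set.Icc c d) ∧
      ∀ x ∈ Set.Ioo (0 : ℝ) 1, ∃ n : ℕ, (chaosMap a b)^[n] x ∈ Set.Icc c d := by
  obtain ⟨s, hs⟩ : b ∈ range sigmoid := range_sigmoid ▸ hb
  have hconj := semiconj_sigmoid_logitChaosMap a b
  refine ⟨sigmoid (s - a), sigmoid (s + a), sigmoid_pos _, sigmoid_le (by linarith),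
    sigmoid_lt_one _, ?_, ?_⟩
  · rw [← image_sigmoid_Icc]
    exact hconj.mapsTo_image (mapsTo_logitChaosMap_Icc ha.le hs)
  · intro x hx
    obtain ⟨y, rfl⟩ : x ∈ range sigmoid := range_sigmoid ▸ hx
    obtain ⟨n, hn⟩ := exists_iterate_logitChaosMap_mem_Icc ha hs y
    exact ⟨n, (hconj.iterate_right n).eq y ▸ image_sigmoid_Icc _ _ ▸ mem_image_of_mem _ hn⟩
end

section
/- If a > 4 and b ∈ (0,1), then the Schwarzian derivative of f_{a,b} is negative; that is, for every x ∈ [0,1] with f_{a,b}'(x) ≠ 0 one has f_{a,b}'''(x)/f_{a,b}'(x) − (3/2)·(f_{a,b}''(x)/f_{a,b}'(x))² < 0. -/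
/-!
Write `E = exp (a (x - b))` and `D = x + (1 - x) E`, so that `f_{a,b} = x / D`. Since `E' = a E`,
every derivative of `f_{a,b}` has the shape `E N / D ^ k` with `N` a polynomial in `x`, `E`, `a`,
and `f'_{a,b} = E (1 - a x (1 - x)) / D ^ 2`. Carrying this through three derivatives, a polynomial
identity collapses the Schwarzian to `K / (1 - a u) ^ 2` with `u = x (1 - x) ≤ 1 / 4` and
`K = 6 a - a ^ 2 / 2 * ((2 - a u) ^ 2 + 2)`, independent of `b` and of `E`; `K < 0` once `a > 4`.
-/

open Real Filter Topology

noncomputable def schwarzian (f : ℝ → ℝ) (x : ℝ) : ℝ :=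
  deriv (deriv (deriv f)) x / deriv f x - (3 / 2) * (deriv (deriv f) x / deriv f x) ^ 2

theorem schwarzian_eq_of_hasDerivAt {f f₁ f₂ : ℝ → ℝ} {f₃ x : ℝ}
    (h₁ : ∀ᶠ y in 𝓝 x, HasDerivAt f (f₁ y) y) (h₂ : ∀ᶠ y in 𝓝 x, HasDerivAt f₁ (f₂ y) y)
    (h₃ : HasDerivAt f₂ f₃ x) :
    schwarzian f x = f₃ / f₁ x - (3 / 2) * (f₂ x / f₁ x) ^ 2 := by
  have e₁ : deriv f =ᶠ[𝓝 x] f₁ := h₁.mono fun y hy => hy.deriv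
  have e₂ : deriv (deriv f) =ᶠ[𝓝 x] f₂ := by
    filter_upwards [e₁.eventuallyEq_nhds, h₂] with y hy hy₂
    rw [hy.deriv_eq, hy₂.deriv]
  rw [schwarzian, e₂.deriv_eq, h₃.deriv, e₁.self_of_nhds, e₂.self_of_nhds]

namespace ChaosMap

variable (a b : ℝ)

noncomputable def expPart (x : ℝ) : ℝ := exp (a * (x - b))

noncomputable def denom (x : ℝ) : ℝ := x + (1 - x) * expPart a b x

noncomputable def denom' (x : ℝ) : ℝ := 1 + (a * (1 - x) - 1) * expPart a b x

noncomputable def denom'' (x : ℝ) : ℝ := a * (a * (1 - x) - 2) * expPart a b x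

def numer₁ (x : ℝ) : ℝ := 1 - a * (x * (1 - x))

def numer₁' (x : ℝ) : ℝ := a * (2 * x - 1)

/- The `k`-th derivative of `chaosMap a b` is `expPart * numerₖ / denom ^ (k + 1)`, so by
`hasDerivAt_expPart_mul_div_pow` the numerators obey
`numerₖ₊₁ = (a numerₖ + numerₖ') denom - (k + 1) numerₖ denom'`. -/
noncomputable def numer₂ (x : ℝ) : ℝ :=
  (a * numer₁ a x + numer₁' a x) * denom a b x - 2 * numer₁ a x * denom' a b x

noncomputable def numer₂' (x : ℝ) : ℝ :=
  (a * numer₁' a x + 2 * a) * denom a b x + (a * numer₁ a x + numer₁' a x) * denom' a b x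
    - 2 * numer₁' a x * denom' a b x - 2 * numer₁ a x * denom'' a b x

noncomputable def numer₃ (x : ℝ) : ℝ :=
  (a * numer₂ a b x + numer₂' a b x) * denom a b x - 3 * numer₂ a b x * denom' a b x

theorem hasDerivAt_expPart (x : ℝ) : HasDerivAt (expPart a b) (a * expPart a b x) x :=
  (((hasDerivAt_id' x).sub_const b).const_mul a).exp.congr_deriv (by rw [expPart]; ring)

theorem hasDerivAt_denom (x : ℝ) : HasDerivAt (denom a b) (denom' a b x) x := by
  have := (hasDerivAt_id' x).add (((hasDerivAt_id' x).const_sub 1).mul (hasDerivAt_expPart a b x))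
  refine this.congr_deriv ?_
  rw [denom']; ring

theorem hasDerivAt_denom' (x : ℝ) : HasDerivAt (denom' a b) (denom'' a b x) x := by
  have := (((((hasDerivAt_id' x).const_sub 1).const_mul a).sub_const 1).mul
    (hasDerivAt_expPart a b x)).const_add 1
  refine this.congr_deriv ?_
  rw [denom'']; ring

theorem hasDerivAt_numer₁ (x : ℝ) : HasDerivAt (numer₁ a) (numer₁' a x) x := by
  have := (((hasDerivAt_id' x).mul ((hasDerivAt_id' x).const_sub 1)).const_mul a).const_sub 1
  refine this.congr_deriv ?_
  rw [numer₁']; ring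

theorem hasDerivAt_numer₁' (x : ℝ) : HasDerivAt (numer₁' a) (2 * a) x :=
  ((((hasDerivAt_id' x).const_mul 2).sub_const 1).const_mul a).congr_deriv (by ring)

theorem hasDerivAt_numer₂ (x : ℝ) : HasDerivAt (numer₂ a b) (numer₂' a b x) x := by
  have := ((((hasDerivAt_numer₁ a x).const_mul a).add (hasDerivAt_numer₁' a x)).mul
    (hasDerivAt_denom a b x)).sub
      (((hasDerivAt_numer₁ a x).const_mul 2).mul (hasDerivAt_denom' a b x))
  refine this.congr_deriv ?_
  simp only [numer₂', Pi.add_apply]; ring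

theorem hasDerivAt_expPart_mul_div_pow {N D : ℝ → ℝ} {N' D' x : ℝ} (k : ℕ)
    (hN : HasDerivAt N N' x) (hD : HasDerivAt D D' x) (hDx : D x ≠ 0) :
    HasDerivAt (fun y => expPart a b y * N y / D y ^ k)
      (expPart a b x * ((a * N x + N') * D x - k * N x * D') / D x ^ (k + 1)) x := by
  have := ((hasDerivAt_expPart a b x).mul hN).div (hD.pow k) (pow_ne_zero k hDx)
  refine this.congr_deriv ?_
  simp only [Pi.mul_apply, Pi.pow_apply]
  rcases k with _ | k
  · simp
    field_simp
  · rw [Nat.add_sub_cancel]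
    field_simp
    push_cast
    ring

theorem hasDerivAt_chaosMap {x : ℝ} (hx : denom a b x ≠ 0) :
    HasDerivAt (chaosMap a b) (expPart a b x * numer₁ a x / denom a b x ^ 2) x := by
  refine ((hasDerivAt_id' x).div (hasDerivAt_denom a b x) hx).congr_deriv ?_
  simp only [denom, denom', numer₁]
  field_simp
  ring

theorem hasDerivAt_chaosMap_deriv {x : ℝ} (hx : denom a b x ≠ 0) :
    HasDerivAt (fun y => expPart a b y * numer₁ a y / denom a b y ^ 2)
      (expPart a b x * numer₂ a b x / denom a b x ^ 3) x := by
  convert hasDerivAt_expPart_mul_div_pow a b 2 (hasDerivAt_numer₁ a x) (hasDerivAt_denom a b x) hx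
    using 1
  simp [numer₂]

theorem hasDerivAt_chaosMap_deriv2 {x : ℝ} (hx : denom a b x ≠ 0) :
    HasDerivAt (fun y => expPart a b y * numer₂ a b y / denom a b y ^ 3)
      (expPart a b x * numer₃ a b x / denom a b x ^ 4) x := by
  convert hasDerivAt_expPart_mul_div_pow a b 3 (hasDerivAt_numer₂ a b x) (hasDerivAt_denom a b x)
    hx using 1
  simp [numer₃]

noncomputable def schwarzianNumer (u : ℝ) : ℝ := 6 * a - a ^ 2 / 2 * ((2 - a * u) ^ 2 + 2)

theorem numer₃_mul_numer₁_sub_numer₂_sq (x : ℝ) :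
    numer₃ a b x * numer₁ a x - 3 / 2 * numer₂ a b x ^ 2
      = schwarzianNumer a (x * (1 - x)) * denom a b x ^ 2 := by
  simp only [numer₃, numer₂', numer₂, numer₁', numer₁, denom'', denom', denom, schwarzianNumer]
  ring

theorem denom_pos {x : ℝ} (hx : x ∈ Set.Icc (0 : ℝ) 1) : 0 < denom a b x := by
  have hE : 0 < expPart a b x := exp_pos _
  rcases hx.1.eq_or_lt with rfl | hx₀
  · simpa [denom] using hE
  · have : 0 ≤ (1 - x) * expPart a b x := mul_nonneg (by linarith [hx.2]) hE.le
    rw [denom]; linarith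

theorem continuous_denom : Continuous (denom a b) := by
  unfold denom expPart; fun_prop

variable {a b}

theorem schwarzianNumer_neg {u : ℝ} (ha : 4 < a) (hu : u ≤ 1 / 4) : schwarzianNumer a u < 0 := by
  suffices h : 12 < a * ((2 - a * u) ^ 2 + 2) by
    unfold schwarzianNumer; nlinarith
  rcases le_or_gt a 6 with ha6 | ha6
  · have hsq : (2 - a / 4) ^ 2 ≤ (2 - a * u) ^ 2 :=
      pow_le_pow_left₀ (by linarith) (by nlinarith) 2
    -- `16 (a ((2 - a / 4) ^ 2 + 2) - 12) = (a - 4) ((a - 6) ^ 2 + 12)`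
    have hcubic : 0 < (a - 4) * ((a - 6) ^ 2 + 12) := by positivity
    nlinarith
  · nlinarith [sq_nonneg (2 - a * u)]

theorem schwarzian_chaosMap {x : ℝ} (hx : x ∈ Set.Icc (0 : ℝ) 1) (hp : numer₁ a x ≠ 0) :
    schwarzian (chaosMap a b) x = schwarzianNumer a (x * (1 - x)) / numer₁ a x ^ 2 := by
  have hD := (denom_pos a b hx).ne'
  have hnear : ∀ᶠ y in 𝓝 x, denom a b y ≠ 0 :=
    (continuous_denom a b).continuousAt.eventually_ne hD
  rw [schwarzian_eq_of_hasDerivAt (hnear.mono fun y => hasDerivAt_chaosMap a b)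
    (hnear.mono fun y => hasDerivAt_chaosMap_deriv a b) (hasDerivAt_chaosMap_deriv2 a b hD)]
  have hE : expPart a b x ≠ 0 := (exp_pos _).ne'
  field_simp
  linear_combination 2 * numer₃_mul_numer₁_sub_numer₂_sq a b x

end ChaosMap

open ChaosMap in
theorem stmt_1_general (a b : ℝ) (ha : 4 < a)
    (x : ℝ) (hx : x ∈ Set.Icc (0 : ℝ) 1) (hd : deriv (chaosMap a b) x ≠ 0) :
    deriv (deriv (deriv (chaosMap a b))) x / deriv (chaosMap a b) x
      - (3 / 2) * (deriv (deriv (chaosMap a b)) x / deriv (chaosMap a b) x) ^ 2 < 0 := by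
  rw [(hasDerivAt_chaosMap a b (denom_pos a b hx).ne').deriv] at hd
  have hp : numer₁ a x ≠ 0 := right_ne_zero_of_mul (div_ne_zero_iff.1 hd).1
  have hu : x * (1 - x) ≤ 1 / 4 := by nlinarith [sq_nonneg (2 * x - 1)]
  change schwarzian (chaosMap a b) x < 0
  rw [schwarzian_chaosMap hx hp]
  exact div_neg_of_neg_of_pos (schwarzianNumer_neg ha hu) (by positivity)

/-- If `a > 4` and `b ∈ (0,1)` then the Schwarzian derivative of `f_{a,b}`
is negative at every point of `[0,1]` where `f'_{a,b}` does not vanish. -/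
theorem stmt_1 (a b : ℝ) (ha : 4 < a) (hb : b ∈ Set.Ioo (0 : ℝ) 1)
    (x : ℝ) (hx : x ∈ Set.Icc (0 : ℝ) 1) (hd : deriv (chaosMap a b) x ≠ 0) :
    deriv (deriv (deriv (chaosMap a b))) x / deriv (chaosMap a b) x
      - (3 / 2) * (deriv (deriv (chaosMap a b)) x / deriv (chaosMap a b) x) ^ 2 < 0 :=
  stmt_1_general a b ha x hx hd
end

section
/- For every a > 0, b ∈ (0,1) and every x ∈ (0,1), the Cesàro averages of the orbit of x converge to b: lim_{n→∞} (1/n)·Σ_{k=0}^{n-1} f_{a,b}^k(x) = b. -/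
/-!
In the logit coordinate `L(x) = log (x / (1 - x))` the map reads `L ↦ L - a (x - b)`, so
`a · ∑_{k<n} (f^k x - b)` telescopes to `L(x) - L(f^n x)`. Each step moves `L` towards `L(b)`
(the sign of `x - b` is that of `L(x) - L(b)`) by at most `a`, so `L` stays bounded along the
orbit and the Cesàro averages differ from `b` by `O(1/n)`.
-/

open Filter Finset Set Topology

lemma abs_add_le_max_of_mul_nonpos {d e : ℝ} (h : d * e ≤ 0) : |d + e| ≤ max |d| |e| := by
  rcases mul_nonpos_iff.mp h with ⟨hd, he⟩ | ⟨hd, he⟩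
  · rw [max_comm]
    exact abs_le_max_abs_abs (by linarith) (by linarith)
  · exact abs_le_max_abs_abs (by linarith) (by linarith)

lemma abs_sub_le_of_steps_toward {u : ℕ → ℝ} {M c : ℝ}
    (hstep : ∀ n, |u (n + 1) - u n| ≤ c)
    (htoward : ∀ n, (u (n + 1) - u n) * (u n - M) ≤ 0) :
    ∀ n, |u n - M| ≤ max |u 0 - M| c := by
  intro n
  induction n with
  | zero => exact le_max_left _ _
  | succ n ih =>
    calc |u (n + 1) - M| = |(u (n + 1) - u n) + (u n - M)| := by ring_nf
      _ ≤ max |u (n + 1) - u n| |u n - M| := abs_add_le_max_of_mul_nonpos (htoward n)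
      _ ≤ max |u 0 - M| c := max_le ((hstep n).trans (le_max_right _ _)) ih

lemma tendsto_average_of_abs_sum_sub_le {u : ℕ → ℝ} {b C : ℝ}
    (h : ∀ n, |∑ k ∈ range n, (u k - b)| ≤ C) :
    Tendsto (fun n : ℕ => (∑ k ∈ range n, u k) / n) atTop (𝓝 b) := by
  have herr : Tendsto (fun n : ℕ => (∑ k ∈ range n, (u k - b)) / n) atTop (𝓝 0) := by
    refine squeeze_zero_norm (fun n => ?_) (tendsto_const_div_atTop_nhds_zero_nat C)
    rw [Real.norm_eq_abs, abs_div, Nat.abs_cast]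
    exact div_le_div_of_nonneg_right (h n) n.cast_nonneg
  have hlim := herr.const_add b
  rw [add_zero] at hlim
  refine hlim.congr' ?_
  filter_upwards [eventually_ne_atTop 0] with n hn
  rw [sum_sub_distrib, sum_const, card_range, nsmul_eq_mul]
  field_simp
  ring

noncomputable def logit (x : ℝ) : ℝ := Real.log (x / (1 - x))

lemma logit_le_logit {x y : ℝ} (hx : x ∈ Ioo (0 : ℝ) 1) (hy : y ∈ Ioo (0 : ℝ) 1)
    (hxy : x ≤ y) :
    logit x ≤ logit y := by
  have h1x : 0 < 1 - x := by linarith [hx.2]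
  have h1y : 0 < 1 - y := by linarith [hy.2]
  apply Real.log_le_log (div_pos hx.1 h1x)
  rw [div_le_div_iff₀ h1x h1y]
  nlinarith

lemma mul_sub_logit_sub_nonneg {x y : ℝ} (hx : x ∈ Ioo (0 : ℝ) 1)
    (hy : y ∈ Ioo (0 : ℝ) 1) :
    0 ≤ (x - y) * (logit x - logit y) := by
  rcases le_total x y with h | h
  · exact mul_nonneg_of_nonpos_of_nonpos (by linarith) (by linarith [logit_le_logit hx hy h])
  · exact mul_nonneg (by linarith) (by linarith [logit_le_logit hy hx h])

section chaosMap

variable {a b : ℝ}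

lemma mapsTo_chaosMap : MapsTo (chaosMap a b) (Ioo 0 1) (Ioo 0 1) := by
  rintro x ⟨hx0, hx1⟩
  have he := Real.exp_pos (a * (x - b))
  have hD : 0 < x + (1 - x) * Real.exp (a * (x - b)) := by nlinarith
  refine ⟨div_pos hx0 hD, ?_⟩
  rw [chaosMap, div_lt_one hD]
  nlinarith

lemma logit_chaosMap {x : ℝ} (hx : x ∈ Ioo (0 : ℝ) 1) :
    logit (chaosMap a b x) = logit x - a * (x - b) := by
  obtain ⟨hx0, hx1⟩ := hx
  have he := Real.exp_pos (a * (x - b))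
  have h1x : 0 < 1 - x := by linarith
  have hD : 0 < x + (1 - x) * Real.exp (a * (x - b)) := by nlinarith
  have hratio : chaosMap a b x / (1 - chaosMap a b x)
      = x / (1 - x) * Real.exp (-(a * (x - b))) := by
    rw [chaosMap, Real.exp_neg]
    field_simp
    ring
  rw [logit, hratio, Real.log_mul (div_pos hx0 h1x).ne' (Real.exp_pos _).ne', Real.log_exp, logit]
  ring

lemma mul_sum_iterate_chaosMap_sub {x : ℝ} (hx : x ∈ Ioo (0 : ℝ) 1) (n : ℕ) :
    a * ∑ k ∈ range n, ((chaosMap a b)^[k] x - b) = logit x - logit ((chaosMap a b)^[n] x) := by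
  have htelescope := sum_range_sub' (fun k => logit ((chaosMap a b)^[k] x)) n
  rw [Function.iterate_zero_apply] at htelescope
  rw [mul_sum, ← htelescope]
  refine sum_congr rfl fun k _ => ?_
  rw [Function.iterate_succ_apply', logit_chaosMap (mapsTo_chaosMap.iterate k hx)]
  ring

lemma abs_logit_iterate_chaosMap_sub_le (ha : 0 ≤ a) (hb : b ∈ Ioo (0 : ℝ) 1) {x : ℝ}
    (hx : x ∈ Ioo (0 : ℝ) 1) (n : ℕ) :
    |logit ((chaosMap a b)^[n] x) - logit b| ≤ max |logit x - logit b| a := by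
  have horbit k : (chaosMap a b)^[k] x ∈ Ioo (0 : ℝ) 1 := mapsTo_chaosMap.iterate k hx
  have hstep k : logit ((chaosMap a b)^[k + 1] x) - logit ((chaosMap a b)^[k] x)
      = -(a * ((chaosMap a b)^[k] x - b)) := by
    rw [Function.iterate_succ_apply', logit_chaosMap (horbit k)]
    ring
  refine abs_sub_le_of_steps_toward (u := fun k => logit ((chaosMap a b)^[k] x))
    (fun k => ?_) (fun k => ?_) n
  · rw [hstep, abs_neg, abs_mul, abs_of_nonneg ha]
    obtain ⟨h0, h1⟩ := horbit k
    exact mul_le_of_le_one_right ha (abs_le.mpr ⟨by linarith [hb.2], by linarith [hb.1]⟩)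
  · rw [hstep, neg_mul, mul_assoc, neg_nonpos]
    exact mul_nonneg ha (mul_sub_logit_sub_nonneg (horbit k) hb)

end chaosMap

/-- For every `a > 0`, `b ∈ (0,1)` and `x ∈ (0,1)`, the Cesàro averages of the
orbit of `x` under `f_{a,b}` converge to `b`. -/
theorem stmt_2 (a b : ℝ) (ha : 0 < a) (hb : b ∈ Set.Ioo (0 : ℝ) 1)
    (x : ℝ) (hx : x ∈ Set.Ioo (0 : ℝ) 1) :
    Filter.Tendsto (fun n : ℕ => (∑ k ∈ Finset.range n, (chaosMap a b)^[k] x) / n)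
      Filter.atTop (nhds b) := by
  set B := max |logit x - logit b| a
  have hstart : |logit x - logit b| ≤ B := le_max_left _ _
  have horbit n : |logit ((chaosMap a b)^[n] x) - logit b| ≤ B :=
    abs_logit_iterate_chaosMap_sub_le ha.le hb hx n
  refine tendsto_average_of_abs_sum_sub_le (C := 2 * B / a) fun n => ?_
  rw [le_div_iff₀' ha]
  calc a * |∑ k ∈ range n, ((chaosMap a b)^[k] x - b)|
      = |a * ∑ k ∈ range n, ((chaosMap a b)^[k] x - b)| := by rw [abs_mul, abs_of_pos ha]
    _ = |(logit x - logit b) - (logit ((chaosMap a b)^[n] x) - logit b)| := by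
        rw [mul_sum_iterate_chaosMap_sub hx, sub_sub_sub_cancel_right]
    _ ≤ |logit x - logit b| + |logit ((chaosMap a b)^[n] x) - logit b| := abs_sub _ _
    _ ≤ 2 * B := by linarith [horbit n]
end

section
/- For every a > 0 and b ∈ (0,1), if μ is a Borel probability measure on [0,1] invariant under f_{a,b} (i.e., μ(f_{a,b}^{-1}(A)) = μ(A) for all Borel sets A) and μ({0,1}) = 0, then ∫_{[0,1]} x dμ(x) = b. -/
/-!
The log-odds `ℓ x = log x - log (1 - x)` conjugates `f_{a,b}` to a bounded perturbation of the
identity: `ℓ (f x) = ℓ x - a (x - b)` on `(0,1)`. For an invariant probability measure, the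
integral of a coboundary `g ∘ f - g` vanishes whenever it is integrable, even if `g` itself is
not (truncate `g` and pass to the limit by dominated convergence). Applied to `g = ℓ`, this gives
`a (∫ x dμ - b) = 0`.
-/

open MeasureTheory Filter Set

noncomputable def truncAt (n : ℕ) (v : ℝ) : ℝ :=
  projIcc (-n : ℝ) n (neg_le_self n.cast_nonneg) v

lemma continuous_truncAt (n : ℕ) : Continuous (truncAt n) :=
  continuous_subtype_val.comp continuous_projIcc

lemma abs_truncAt_le (n : ℕ) (v : ℝ) : |truncAt n v| ≤ n :=
  abs_le.2 (projIcc _ _ _ v).2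

lemma abs_truncAt_sub_truncAt_le (n : ℕ) (u v : ℝ) : |truncAt n u - truncAt n v| ≤ |u - v| :=
  abs_projIcc_sub_projIcc _

lemma eventually_truncAt_eq (v : ℝ) : ∀ᶠ n : ℕ in atTop, truncAt n v = v := by
  filter_upwards [eventually_ge_atTop ⌈|v|⌉₊] with n hn
  have hv : |v| ≤ n := (Nat.le_ceil _).trans (by exact_mod_cast hn)
  simp only [truncAt, projIcc_of_mem _ (abs_le.1 hv)]

namespace MeasureTheory.MeasurePreserving

variable {α : Type*} [MeasurableSpace α] {μ : Measure α} [IsFiniteMeasure μ] {T : α → α}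

lemma integral_comp_sub_eq_zero_of_bounded (hT : MeasurePreserving T μ μ) {h : α → ℝ}
    (hh : Measurable h) {C : ℝ} (hC : ∀ x, |h x| ≤ C) : ∫ x, h (T x) - h x ∂μ = 0 := by
  have hint : Integrable h μ := .of_bound hh.aestronglyMeasurable C (.of_forall hC)
  have hcomp : ∫ x, h (T x) ∂μ = ∫ x, h x ∂μ := by
    conv_rhs => rw [← hT.map_eq]
    exact (integral_map hT.aemeasurable (hT.map_eq ▸ hh.aestronglyMeasurable)).symm
  have hintT : Integrable (fun x => h (T x)) μ := (hT.map_eq ▸ hint).comp_measurable hT.measurable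
  rw [integral_sub hintT hint, hcomp, sub_self]

theorem integral_comp_sub_eq_zero (hT : MeasurePreserving T μ μ) {g : α → ℝ}
    (hg : Measurable g) (hint : Integrable (fun x => g (T x) - g x) μ) :
    ∫ x, g (T x) - g x ∂μ = 0 := by
  set φ : ℕ → α → ℝ := fun n x => truncAt n (g (T x)) - truncAt n (g x)
  have hφ_meas (n : ℕ) : Measurable (φ n) :=
    ((continuous_truncAt n).measurable.comp (hg.comp hT.measurable)).sub
      ((continuous_truncAt n).measurable.comp hg)
  have hφ_zero (n : ℕ) : ∫ x, φ n x ∂μ = 0 :=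
    hT.integral_comp_sub_eq_zero_of_bounded ((continuous_truncAt n).measurable.comp hg)
      (abs_truncAt_le n <| g ·)
  have hφ_le (n : ℕ) : ∀ᵐ x ∂μ, ‖φ n x‖ ≤ ‖g (T x) - g x‖ :=
    .of_forall fun x => abs_truncAt_sub_truncAt_le n _ _
  have hφ_lim : ∀ᵐ x ∂μ, Tendsto (φ · x) atTop (nhds (g (T x) - g x)) :=
    .of_forall fun x => tendsto_const_nhds.congr' <|
      ((eventually_truncAt_eq (g (T x))).and (eventually_truncAt_eq (g x))).mono
        fun n hn => by simp only [φ, hn.1, hn.2]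
  have hlim := tendsto_integral_of_dominated_convergence _
    (fun n => (hφ_meas n).aestronglyMeasurable) hint.norm hφ_le hφ_lim
  simp only [hφ_zero] at hlim
  exact tendsto_nhds_unique hlim tendsto_const_nhds

end MeasureTheory.MeasurePreserving

noncomputable def logOdds (x : ℝ) : ℝ := Real.log x - Real.log (1 - x)

lemma measurable_logOdds : Measurable logOdds :=
  Real.measurable_log.sub (Real.measurable_log.comp (measurable_const.sub measurable_id))

lemma measurable_chaosMap (a b : ℝ) : Measurable (chaosMap a b) := by
  unfold chaosMap; fun_prop

lemma logOdds_chaosMap (a b : ℝ) {x : ℝ} (hx : x ∈ Ioo 0 1) :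
    logOdds (chaosMap a b x) = logOdds x - a * (x - b) := by
  obtain ⟨hx0, hx1⟩ := hx
  set E := Real.exp (a * (x - b))
  have hE : 0 < E := Real.exp_pos _
  have h1x : 0 < 1 - x := by linarith
  have hD : 0 < x + (1 - x) * E := by positivity
  have h1f : 1 - chaosMap a b x = (1 - x) * E / (x + (1 - x) * E) := by
    simp only [chaosMap]; field_simp; ring
  rw [logOdds, h1f, chaosMap, Real.log_div hx0.ne' hD.ne', Real.log_div (by positivity) hD.ne',
    Real.log_mul h1x.ne' hE.ne', Real.log_exp, logOdds]
  ring

lemma ae_mem_Ioo_of_measure_compl_Icc {μ : Measure ℝ} {s t : ℝ} (hIcc : μ (Icc s t)ᶜ = 0)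
    (hends : μ {s, t} = 0) : ∀ᵐ x ∂μ, x ∈ Ioo s t := by
  have hsub : (Ioo s t)ᶜ ⊆ (Icc s t)ᶜ ∪ {s, t} := by
    rw [← Icc_sdiff_both, sdiff_eq, compl_inter, compl_compl]
  exact measure_mono_null hsub (measure_union_null hIcc hends)

theorem stmt_4_general (a b : ℝ) (ha : 0 < a)
    (μ : MeasureTheory.Measure ℝ) [MeasureTheory.IsProbabilityMeasure μ]
    (hsupp : μ (Set.Icc (0 : ℝ) 1)ᶜ = 0)
    (hinv : ∀ A : Set ℝ, MeasurableSet A → μ (chaosMap a b ⁻¹' A) = μ A)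
    (h01 : μ ({0, 1} : Set ℝ) = 0) :
    ∫ x in Set.Icc (0 : ℝ) 1, x ∂μ = b := by
  have hae := ae_mem_Ioo_of_measure_compl_Icc hsupp h01
  have hT : MeasurePreserving (chaosMap a b) μ μ :=
    ⟨measurable_chaosMap a b, Measure.ext fun A hA => by
      rw [Measure.map_apply (measurable_chaosMap a b) hA, hinv A hA]⟩
  have hcob : (fun x => logOdds (chaosMap a b x) - logOdds x) =ᵐ[μ] fun x => -(a * (x - b)) := by
    filter_upwards [hae] with x hx
    rw [logOdds_chaosMap a b hx]; ring
  have hid : Integrable (fun x : ℝ => x) μ :=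
    .of_bound measurable_id.aestronglyMeasurable 1 <| by
      filter_upwards [hae] with x hx
      exact abs_le.2 ⟨by linarith [hx.1], hx.2.le⟩
  have hlin : Integrable (fun x => -(a * (x - b))) μ :=
    ((hid.sub (integrable_const b)).const_mul a).neg
  have hzero := hT.integral_comp_sub_eq_zero measurable_logOdds (hlin.congr hcob.symm)
  rw [integral_congr_ae hcob, integral_neg, integral_const_mul,
    integral_sub hid (integrable_const b), integral_const, probReal_univ, one_smul] at hzero
  rw [Measure.restrict_eq_self_of_ae_mem (hae.mono fun x hx => Ioo_subset_Icc_self hx)]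
  nlinarith

/-- For every `a > 0` and `b ∈ (0,1)`, if `μ` is a Borel probability measure on
`[0,1]` invariant under `f_{a,b}` with `μ({0,1}) = 0`, then `∫ x dμ = b`. -/
theorem stmt_4 (a b : ℝ) (ha : 0 < a) (hb : b ∈ Set.Ioo (0 : ℝ) 1)
    (μ : MeasureTheory.Measure ℝ) [MeasureTheory.IsProbabilityMeasure μ]
    (hsupp : μ (Set.Icc (0 : ℝ) 1)ᶜ = 0)
    (hinv : ∀ A : Set ℝ, MeasurableSet A → μ (chaosMap a b ⁻¹' A) = μ A)
    (h01 : μ ({0, 1} : Set ℝ) = 0) :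
    ∫ x in Set.Icc (0 : ℝ) 1, x ∂μ = b :=
  stmt_4_general a b ha μ hsupp hinv h01
end

section
/- For every a > 0, b ∈ (0,1), x ∈ [0,1] and n ≥ 1, writing x_k = f_{a,b}^k(x), the n-th iterate satisfies the closed formula x_n = x / (x + (1-x)·exp(a·Σ_{k=0}^{n-1}(x_k − b))). -/
open Real

lemma add_one_sub_mul_exp_pos {x : ℝ} (hx : x ∈ Set.Icc (0 : ℝ) 1) (t : ℝ) :
    0 < x + (1 - x) * exp t := by
  obtain ⟨h0, h1⟩ := hx
  rcases h0.eq_or_lt with rfl | hx0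
  · simpa using exp_pos t
  · have := mul_nonneg (sub_nonneg.2 h1) (exp_pos t).le
    linarith

lemma chaosMap_div_add_one_sub_mul_exp (a b : ℝ) {x : ℝ} (hx : x ∈ Set.Icc (0 : ℝ) 1) (s : ℝ) :
    chaosMap a b (x / (x + (1 - x) * exp s)) =
      x / (x + (1 - x) * exp (s + a * (x / (x + (1 - x) * exp s) - b))) := by
  have hD := (add_one_sub_mul_exp_pos hx s).ne'
  rw [chaosMap, exp_add]
  field_simp
  ring

theorem stmt_5_general (a b : ℝ) (x : ℝ) (hx : x ∈ Set.Icc (0 : ℝ) 1) (n : ℕ) :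
    (chaosMap a b)^[n] x =
      x / (x + (1 - x) *
        Real.exp (a * ∑ k ∈ Finset.range n, ((chaosMap a b)^[k] x - b))) := by
  induction n with
  | zero => simp
  | succ n ih =>
    rw [Function.iterate_succ_apply', ih, chaosMap_div_add_one_sub_mul_exp a b hx,
      Finset.sum_range_succ, ih, mul_add]

/-- For every `a > 0`, `b ∈ (0,1)`, `x ∈ [0,1]` and `n ≥ 1`, writing
`x_k = f_{a,b}^k(x)`, we have
`x_n = x / (x + (1-x) exp (a Σ_{k<n} (x_k - b)))`. -/
theorem stmt_5 (a b : ℝ) (ha : 0 < a) (hb : b ∈ Set.Ioo (0 : ℝ) 1)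
    (x : ℝ) (hx : x ∈ Set.Icc (0 : ℝ) 1) (n : ℕ) (hn : 1 ≤ n) :
    (chaosMap a b)^[n] x =
      x / (x + (1 - x) *
        Real.exp (a * ∑ k ∈ Finset.range n, ((chaosMap a b)^[k] x - b))) :=
  stmt_5_general a b x hx n
end

section
/- For every a with 0 < a ≤ 4 and every b ∈ (0,1), the map f_{a,b} is strictly increasing on [0,1]. Moreover, for a > 4, setting c_l = 1/2 − √(1/4 − 1/a) and c_r = 1/2 + √(1/4 − 1/a), the derivative f_{a,b}'(x) is positive for x ∈ [0,c_l) ∪ (c_r,1], negative for x ∈ (c_l,c_r), and zero exactly at x = c_l and x = c_r. -/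
lemma denom_pos (a b x : ℝ) (hx : x ∈ Set.Icc (0 : ℝ) 1) :
    0 < x + (1 - x) * Real.exp (a * (x - b)) := by
  obtain ⟨h0, h1⟩ := hx
  rcases eq_or_lt_of_le h0 with h | h
  · simp [← h, Real.exp_pos]
  · have : 0 ≤ (1 - x) * Real.exp (a * (x - b)) :=
      mul_nonneg (by linarith) (Real.exp_pos _).le
    linarith

lemma hasDerivAt_chaosMap (a b x : ℝ)
    (hD : x + (1 - x) * Real.exp (a * (x - b)) ≠ 0) :
    HasDerivAt (chaosMap a b)
      ((a * x ^ 2 - a * x + 1) * Real.exp (a * (x - b)) /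
        (x + (1 - x) * Real.exp (a * (x - b))) ^ 2) x := by
  set E := Real.exp (a * (x - b)) with hE
  have hlin : HasDerivAt (fun y : ℝ => a * (y - b)) a x := by
    simpa using ((hasDerivAt_id x).sub_const b).const_mul a
  have hexp : HasDerivAt (fun y : ℝ => Real.exp (a * (y - b))) (E * a) x := hlin.exp
  have h1x : HasDerivAt (fun y : ℝ => 1 - y) (-1) x := by
    simpa using (hasDerivAt_id x).const_sub 1
  have hDD : HasDerivAt (fun y : ℝ => y + (1 - y) * Real.exp (a * (y - b)))
      (1 + ((-1) * E + (1 - x) * (E * a))) x :=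
    (hasDerivAt_id x).add (h1x.mul hexp)
  have hdiv := (hasDerivAt_id x).div hDD hD
  have heq : (1 * (x + (1 - x) * E) - id x * (1 + (-1 * E + (1 - x) * (E * a)))) /
      (x + (1 - x) * E) ^ 2
      = (a * x ^ 2 - a * x + 1) * E / (x + (1 - x) * E) ^ 2 := by
    congr 1
    simp only [id]
    ring
  rw [heq] at hdiv
  exact hdiv

lemma deriv_chaosMap (a b x : ℝ)
    (hD : x + (1 - x) * Real.exp (a * (x - b)) ≠ 0) :
    deriv (chaosMap a b) x
      = (a * x ^ 2 - a * x + 1) * Real.exp (a * (x - b)) /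
        (x + (1 - x) * Real.exp (a * (x - b))) ^ 2 :=
  (hasDerivAt_chaosMap a b x hD).deriv

/-- If `0 < a ≤ 4` then `f_{a,b}` is strictly increasing on `[0,1]`; if `a > 4`
then, with `c_l = 1/2 - √(1/4 - 1/a)` and `c_r = 1/2 + √(1/4 - 1/a)`, the
derivative of `f_{a,b}` is positive on `[0,c_l) ∪ (c_r,1]`, negative on
`(c_l,c_r)`, and vanishes exactly at `c_l` and `c_r`. -/
theorem stmt_7 (a b : ℝ) (hb : b ∈ Set.Ioo (0 : ℝ) 1) :
    ((0 < a ∧ a ≤ 4) → StrictMonoOn (chaosMap a b) (Set.Icc (0 : ℝ) 1)) ∧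
    (4 < a →
      ∀ cl cr : ℝ, cl = 1 / 2 - Real.sqrt (1 / 4 - 1 / a) →
        cr = 1 / 2 + Real.sqrt (1 / 4 - 1 / a) →
        ∀ x ∈ Set.Icc (0 : ℝ) 1,
          ((x < cl ∨ cr < x) → 0 < deriv (chaosMap a b) x) ∧
          (cl < x → x < cr → deriv (chaosMap a b) x < 0) ∧
          (deriv (chaosMap a b) x = 0 ↔ x = cl ∨ x = cr)) := by
  constructor
  · rintro ⟨ha0, ha4⟩
    -- continuity on [0,1]
    have hcont : ContinuousOn (chaosMap a b) (Set.Icc (0 : ℝ) 1) := fun x hx =>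
      (hasDerivAt_chaosMap a b x (denom_pos a b x hx).ne').continuousAt.continuousWithinAt
    have key : ∀ x ∈ Set.Icc (0 : ℝ) 1, x ≠ 1 / 2 → 0 < deriv (chaosMap a b) x := by
      intro x hx hne
      obtain ⟨hx0, hx1⟩ := hx
      have hD := denom_pos a b x ⟨hx0, hx1⟩
      rw [deriv_chaosMap a b x hD.ne']
      have hg : 0 < a * x ^ 2 - a * x + 1 := by
        have hsq : 0 < (1 - 2 * x) * (1 - 2 * x) :=
          mul_self_pos.mpr (by intro h; apply hne; linarith)
        nlinarith [mul_nonneg hx0 (by linarith : (0:ℝ) ≤ 1 - x)]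
      exact div_pos (mul_pos hg (Real.exp_pos _)) (pow_pos hD 2)
    have h1 : StrictMonoOn (chaosMap a b) (Set.Icc (0 : ℝ) (1 / 2)) := by
      apply strictMonoOn_of_deriv_pos (convex_Icc _ _)
        (hcont.mono (Set.Icc_subset_Icc le_rfl (by norm_num)))
      intro x hx
      rw [interior_Icc] at hx
      exact key x ⟨hx.1.le, by linarith [hx.2]⟩ (by linarith [hx.2])
    have h2 : StrictMonoOn (chaosMap a b) (Set.Icc (1 / 2 : ℝ) 1) := by
      apply strictMonoOn_of_deriv_pos (convex_Icc _ _)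
        (hcont.mono (Set.Icc_subset_Icc (by norm_num) le_rfl))
      intro x hx
      rw [interior_Icc] at hx
      exact key x ⟨by linarith [hx.1], hx.2.le⟩ (by linarith [hx.1])
    have := h1.union h2 (isGreatest_Icc (by norm_num)) (isLeast_Icc (by norm_num))
    rwa [Set.Icc_union_Icc_eq_Icc (by norm_num) (by norm_num)] at this
  · intro ha4 cl cr hcl hcr x hx
    have ha0 : (0 : ℝ) < a := by linarith
    have hpos : (0 : ℝ) < 1 / 4 - 1 / a := by
      have : 1 / a < 1 / 4 := by rw [div_lt_div_iff₀ ha0 (by norm_num)]; linarith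
      linarith
    set s := Real.sqrt (1 / 4 - 1 / a) with hs
    have hs2 : s ^ 2 = 1 / 4 - 1 / a := Real.sq_sqrt hpos.le
    have hspos : 0 < s := Real.sqrt_pos.mpr hpos
    have hclr : cl < cr := by rw [hcl, hcr]; linarith
    have hprod : a * (cl * cr) = 1 := by
      have h : cl * cr = 1 / a := by rw [hcl, hcr]; linear_combination -hs2
      rw [h]; field_simp
    have hfac : ∀ y : ℝ, a * y ^ 2 - a * y + 1 = a * (y - cl) * (y - cr) := by
      intro y
      have hsum : cl + cr = 1 := by rw [hcl, hcr]; ring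
      linear_combination (a * y) * hsum - hprod
    have hD := denom_pos a b x hx
    rw [deriv_chaosMap a b x hD.ne', hfac x]
    refine ⟨?_, ?_, ?_⟩
    · rintro (h | h)
      · have : 0 < a * (x - cl) * (x - cr) := by
          nlinarith [mul_pos (sub_pos.mpr h) (sub_pos.mpr (h.trans hclr))]
        exact div_pos (mul_pos this (Real.exp_pos _)) (pow_pos hD 2)
      · have : 0 < a * (x - cl) * (x - cr) := by
          nlinarith [mul_pos (sub_pos.mpr (hclr.trans h)) (sub_pos.mpr h)]
        exact div_pos (mul_pos this (Real.exp_pos _)) (pow_pos hD 2)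
    · intro h1 h2
      have : a * (x - cl) * (x - cr) < 0 := by
        nlinarith [mul_pos (sub_pos.mpr h1) (sub_pos.mpr h2)]
      exact div_neg_of_neg_of_pos (mul_neg_of_neg_of_pos this (Real.exp_pos _)) (pow_pos hD 2)
    · rw [div_eq_zero_iff]
      simp only [mul_eq_zero, Real.exp_ne_zero, or_false, (pow_pos hD 2).ne', ha0.ne',
        false_or, sub_eq_zero]
end

section
/- Let a > 0 and let f_a = f_{a,1/2}. For every x ∈ (0,1), the sequence of iterates f_a^n(x) converges either to a fixed point of f_a lying in (0,1), or to one of the two points of a periodic orbit of f_a of period 2 contained in (0,1) (i.e., the even and odd subsequences f_a^{2n}(x) and f_a^{2n+1}(x) converge to points p, q ∈ (0,1) with f_a(p) = q and f_a(q) = p). -/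
/-!
In logit coordinates `x = σ y` (`σ` the sigmoid), `f_a` becomes `y ↦ -φ y` with
`φ y = a (σ y - 1/2) - y` (`oddMap a`). Since `φ` is odd, `f_a²` is conjugate to `φ²`, so it
suffices that every `φ`-orbit converges to a fixed point `L` of `φ`; then `σ L, σ (-L)` is the
limiting cycle.

For `a ≤ 8`, `0 < σ y - 1/2 < y / 4` for `y > 0` gives `|φ y| < |y|`, and orbits tend to `0`.
For `a > 8`, `φ` has a fixed point `r > 0`, and strict concavity of `σ` on `[0, ∞)` yields
`|φ z - r| < |z - r|` for every `z > 0`. Hence `(0, 2r)` lies in the basin of `r`, and every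
orbit enters `(-2r, 2r)`: outside it, `||z| - r|` decreases strictly along the orbit, which stays
in a compact set.
-/

open Real Filter Topology Set Function

theorem tendsto_of_dist_map_lt {X : Type*} [MetricSpace X] {g : X → X} (hg : Continuous g)
    {r : X} (hr : g r = r) {K : Set X} (hK : IsCompact K)
    (hdec : ∀ w ∈ K, w ≠ r → dist (g w) r < dist w r) {z : ℕ → X}
    (hz : ∀ n, z (n + 1) = g (z n)) (hzK : ∀ n, z n ∈ K) : Tendsto z atTop (𝓝 r) := by
  have hanti : Antitone fun n => dist (z n) r := by
    refine antitone_nat_of_succ_le fun n => ?_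
    rw [hz]
    rcases eq_or_ne (z n) r with h | h
    · simp [h, hr]
    · exact (hdec _ (hzK n) h).le
  have hL := tendsto_atTop_ciInf hanti ⟨0, by rintro _ ⟨n, rfl⟩; exact dist_nonneg⟩
  set L := ⨅ n, dist (z n) r
  -- A cluster point `c` of the orbit and its image `g c` both lie at distance `L` from `r`.
  obtain ⟨c, hcK, ψ, hψ, hzψ⟩ := hK.tendsto_subseq hzK
  have hc : dist c r = L :=
    tendsto_nhds_unique (hzψ.dist tendsto_const_nhds) (hL.comp hψ.tendsto_atTop)
  have hgc : dist (g c) r = L := by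
    have hzψ' : Tendsto (fun n => z (ψ n + 1)) atTop (𝓝 (g c)) := by
      simp only [hz]
      exact (hg.tendsto c).comp hzψ
    exact tendsto_nhds_unique (hzψ'.dist tendsto_const_nhds)
      (hL.comp ((tendsto_add_atTop_nat 1).comp hψ.tendsto_atTop))
  have hcr : c = r := by
    by_contra h
    exact (hdec c hcK h).ne (hgc.trans hc.symm)
  rw [tendsto_iff_dist_tendsto_zero]
  rwa [← hc, hcr, dist_self] at hL

lemma strictConcaveOn_sigmoid : StrictConcaveOn ℝ (Ici 0) sigmoid := by
  refine StrictAntiOn.strictConcaveOn_of_deriv (convex_Ici 0)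
    continuous_sigmoid.continuousOn ?_
  rw [interior_Ici, deriv_sigmoid]
  intro u hu v _ huv
  have hu' : sigmoid 0 < sigmoid u := sigmoid_strictMono hu
  have huv' := sigmoid_strictMono huv
  rw [sigmoid_zero] at hu'
  nlinarith

lemma sigmoid_sub_half_div_strictAntiOn :
    StrictAntiOn (fun y => (sigmoid y - 1 / 2) / y) (Ioi 0) := by
  intro u hu v hv huv
  simpa [sigmoid_zero] using strictConcaveOn_sigmoid.secant_strict_mono self_mem_Ici
    (mem_Ici.2 (le_of_lt hu)) (mem_Ici.2 (le_of_lt hv)) (ne_of_gt hu) (ne_of_gt hv) huv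

lemma sigmoid_sub_half_lt {y : ℝ} (hy : 0 < y) : sigmoid y - 1 / 2 < y / 4 := by
  have h := strictConcaveOn_sigmoid.slope_lt_of_hasDerivAt self_mem_Ici (mem_Ici.2 hy.le) hy
    (hasDerivAt_sigmoid 0)
  rw [slope_def_field, sigmoid_zero, sub_zero, div_lt_iff₀ hy] at h
  linarith

noncomputable def oddMap (a y : ℝ) : ℝ := a * (sigmoid y - 1 / 2) - y

section OddMap

variable {a : ℝ}

lemma oddMap_neg (a y : ℝ) : oddMap a (-y) = -oddMap a y := by
  simp only [oddMap, sigmoid_neg]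
  ring

lemma oddMap_zero (a : ℝ) : oddMap a 0 = 0 := by
  simp [oddMap, sigmoid_zero]

lemma iterate_oddMap_neg (a y : ℝ) (n : ℕ) : (oddMap a)^[n] (-y) = -(oddMap a)^[n] y := by
  have h : Semiconj Neg.neg (oddMap a) (oddMap a) := fun y => (oddMap_neg a y).symm
  exact (h.iterate_right n y).symm

lemma abs_oddMap_abs (a y : ℝ) : |oddMap a (|y|)| = |oddMap a y| := by
  rcases abs_choice y with h | h <;> simp [h, oddMap_neg]

lemma continuous_oddMap (a : ℝ) : Continuous (oddMap a) := by
  unfold oddMap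
  fun_prop

lemma chaosMap_sigmoid (a y : ℝ) : chaosMap a (1 / 2) (sigmoid y) = sigmoid (-oddMap a y) := by
  have h1 : 1 - sigmoid y = sigmoid y * exp (-y) := by rw [sigmoid_mul_rexp_neg, sigmoid_neg]
  have hs := sigmoid_pos y
  rw [chaosMap, h1, sigmoid_def (-_), neg_neg, oddMap, sub_eq_neg_add (a * _), exp_add]
  field_simp

lemma chaosMap_iterate_two_mul_sigmoid (a y : ℝ) (n : ℕ) :
    (chaosMap a (1 / 2))^[2 * n] (sigmoid y) = sigmoid ((oddMap a)^[2 * n] y) := by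
  have h : Semiconj sigmoid ((oddMap a)^[2]) ((chaosMap a (1 / 2))^[2]) := fun y => by
    simp only [iterate_succ_apply', iterate_zero_apply, chaosMap_sigmoid, oddMap_neg, neg_neg]
  rw [iterate_mul, iterate_mul]
  exact (h.iterate_right n y).symm

lemma chaosMap_iterate_two_mul_add_one_sigmoid (a y : ℝ) (n : ℕ) :
    (chaosMap a (1 / 2))^[2 * n + 1] (sigmoid y) = sigmoid (-(oddMap a)^[2 * n + 1] y) := by
  rw [iterate_succ_apply', chaosMap_iterate_two_mul_sigmoid, chaosMap_sigmoid,
    iterate_succ_apply']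

lemma abs_oddMap_lt (ha : 0 < a) (h8 : a ≤ 8) {y : ℝ} (hy : y ≠ 0) : |oddMap a y| < |y| := by
  wlog hpos : 0 < y generalizing y
  · simpa [oddMap_neg] using this (neg_ne_zero.2 hy)
      (neg_pos.2 ((not_lt.1 hpos).lt_of_ne hy))
  have h0 : sigmoid 0 < sigmoid y := sigmoid_strictMono hpos
  have h4 := sigmoid_sub_half_lt hpos
  rw [sigmoid_zero] at h0
  rw [abs_of_pos hpos, abs_lt, oddMap]
  constructor <;> nlinarith

lemma tendsto_iterate_oddMap_zero (ha : 0 < a) (h8 : a ≤ 8) (y : ℝ) :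
    Tendsto (fun n => (oddMap a)^[n] y) atTop (𝓝 0) := by
  have hdec : ∀ w ∈ Metric.closedBall 0 |y|, w ≠ 0 → dist (oddMap a w) 0 < dist w 0 :=
    fun w _ hw => by simpa using abs_oddMap_lt ha h8 hw
  have hmaps : MapsTo (oddMap a) (Metric.closedBall 0 |y|) (Metric.closedBall 0 |y|) := by
    intro w hw
    rcases eq_or_ne w 0 with rfl | hw0
    · rwa [oddMap_zero]
    · exact (hdec w hw hw0).le.trans hw
  exact tendsto_of_dist_map_lt (continuous_oddMap a) (oddMap_zero a) (isCompact_closedBall _ _)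
    hdec (fun n => iterate_succ_apply' _ n y) (fun n => hmaps.iterate n (by simp))

lemma exists_pos_oddMap_eq_self (h8 : 8 < a) : ∃ r, 0 < r ∧ oddMap a r = r := by
  set h : ℝ → ℝ := fun z => oddMap a z - z
  have hh0 : h 0 = 0 := by simp [h, oddMap_zero]
  have hderiv : HasDerivAt h (a / 4 - 2) 0 := by
    have := ((((hasDerivAt_sigmoid 0).sub_const (1 / 2)).const_mul a).sub (hasDerivAt_id' 0)).sub
      (hasDerivAt_id' 0)
    rw [sigmoid_zero] at this
    exact this.congr_deriv (by ring)
  -- `h` is positive just to the right of `0`, since `h' 0 > 0`, and negative at `a / 4`.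
  obtain ⟨t, hslope, ht0, hta⟩ : ∃ t, 0 < t⁻¹ • (h (0 + t) - h 0) ∧ 0 < t ∧ t < a / 4 :=
    ((hderiv.tendsto_slope_zero_right.eventually (lt_mem_nhds (by linarith))).and
      (Ioo_mem_nhdsGT (by linarith))).exists.imp fun _ ht => ⟨ht.1, ht.2⟩
  rw [zero_add, hh0, sub_zero, smul_eq_mul] at hslope
  have hht : 0 < h t := pos_of_mul_pos_right hslope (inv_nonneg.2 ht0.le)
  have hha : h (a / 4) < 0 := by
    have := sigmoid_lt_one (a / 4)
    simp only [h, oddMap]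
    nlinarith
  obtain ⟨r, hr, hr0⟩ := intermediate_value_Ioo' hta.le (continuous_oddMap a |>.sub
    continuous_id).continuousOn ⟨hha, hht⟩
  exact ⟨r, ht0.trans hr.1, sub_eq_zero.1 hr0⟩

lemma abs_oddMap_sub_lt (ha : 0 < a) {r z : ℝ} (hr0 : 0 < r) (hr : oddMap a r = r) (hz : 0 < z)
    (hzr : z ≠ r) : |oddMap a z - r| < |z - r| := by
  have hr' : a * (sigmoid r - 1 / 2) = 2 * r := by unfold oddMap at hr; linarith
  unfold oddMap
  -- `a (σ z - 1/2) / z` is strictly decreasing and equals `2` at `z = r`.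
  rcases lt_or_gt_of_ne hzr with h | h
  · have hslope := sigmoid_sub_half_div_strictAntiOn hz hr0 h
    rw [div_lt_div_iff₀ hr0 hz] at hslope
    have := mul_lt_mul_of_pos_left hslope ha
    have := sigmoid_strictMono h
    rw [abs_of_neg (sub_neg.2 h), abs_lt]
    constructor <;> nlinarith
  · have hslope := sigmoid_sub_half_div_strictAntiOn hr0 hz h
    rw [div_lt_div_iff₀ hz hr0] at hslope
    have := mul_lt_mul_of_pos_left hslope ha
    have := sigmoid_strictMono h
    rw [abs_of_pos (sub_pos.2 h), abs_lt]
    constructor <;> nlinarith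

lemma abs_abs_oddMap_sub_lt (ha : 0 < a) {r z : ℝ} (hr0 : 0 < r) (hr : oddMap a r = r)
    (hz : 0 < z) (hzr : z ≠ r) : |(|oddMap a z|) - r| < |z - r| := by
  have h := abs_oddMap_sub_lt ha hr0 hr hz hzr
  rcases le_or_gt 0 (oddMap a z) with hn | hn
  · rwa [abs_of_nonneg hn]
  · rw [abs_of_neg hn]
    rw [abs_lt] at h ⊢
    constructor <;> linarith

lemma tendsto_iterate_oddMap_of_abs_sub_lt (ha : 0 < a) {r z : ℝ} (hr0 : 0 < r)
    (hr : oddMap a r = r) (hz : |z - r| < r) :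
    Tendsto (fun n => (oddMap a)^[n] z) atTop (𝓝 r) := by
  set K := Metric.closedBall r |z - r|
  have hdec : ∀ w ∈ K, w ≠ r → dist (oddMap a w) r < dist w r := by
    intro w hw hwr
    rw [Metric.mem_closedBall, dist_eq] at hw
    have hw0 : 0 < w := by linarith [neg_abs_le (w - r)]
    simpa [dist_eq] using abs_oddMap_sub_lt ha hr0 hr hw0 hwr
  have hmaps : MapsTo (oddMap a) K K := by
    intro w hw
    rcases eq_or_ne w r with rfl | hwr
    · rwa [hr]
    · exact (hdec w hw hwr).le.trans hw
  exact tendsto_of_dist_map_lt (continuous_oddMap a) hr (isCompact_closedBall _ _) hdec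
    (fun n => iterate_succ_apply' _ n z)
    (fun n => hmaps.iterate n (Metric.mem_closedBall.2 (dist_eq z r).le))

lemma exists_abs_iterate_oddMap_lt (ha : 0 < a) {r y : ℝ} (hr0 : 0 < r) (hr : oddMap a r = r) :
    ∃ n, |(oddMap a)^[n] y| < 2 * r := by
  by_contra! hfar
  set u : ℕ → ℝ := fun n => |(oddMap a)^[n] y|
  have hu : ∀ n, u (n + 1) = |oddMap a (u n)| := fun n => by
    simp only [u, abs_oddMap_abs, iterate_succ_apply']
  have hdec : ∀ v ∈ Icc (2 * r) |y|, v ≠ r → dist (|oddMap a v|) r < dist v r :=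
    fun v hv hvr => abs_abs_oddMap_sub_lt ha hr0 hr (by linarith [hv.1]) hvr
  have hanti : Antitone u := by
    refine antitone_nat_of_succ_le fun n => ?_
    have hfar' : r < u n := by linarith [hfar n]
    have h := abs_abs_oddMap_sub_lt ha hr0 hr (hr0.trans hfar') hfar'.ne'
    rw [← hu, abs_of_pos (sub_pos.2 hfar')] at h
    linarith [le_abs_self (u (n + 1) - r)]
  have hlim := tendsto_of_dist_map_lt (continuous_abs.comp (continuous_oddMap a))
    (by simp [hr, abs_of_pos hr0]) isCompact_Icc hdec hu
    (fun n => ⟨hfar n, hanti (Nat.zero_le n)⟩)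
  linarith [ge_of_tendsto' hlim hfar]

lemma exists_tendsto_iterate_oddMap_of_abs_lt (ha : 0 < a) {r w : ℝ} (hr0 : 0 < r)
    (hr : oddMap a r = r) (hw : |w| < 2 * r) :
    ∃ L, oddMap a L = L ∧ Tendsto (fun n => (oddMap a)^[n] w) atTop (𝓝 L) := by
  rw [abs_lt] at hw
  rcases lt_trichotomy w 0 with hneg | rfl | hpos
  · refine ⟨-r, by rw [oddMap_neg, hr], ?_⟩
    have hw' : |-w - r| < r := by rw [abs_lt]; constructor <;> linarith
    simpa [iterate_oddMap_neg] using
      (tendsto_iterate_oddMap_of_abs_sub_lt ha hr0 hr hw').neg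
  · refine ⟨0, oddMap_zero a, ?_⟩
    simp only [iterate_fixed (oddMap_zero a), tendsto_const_nhds]
  · refine ⟨r, hr, tendsto_iterate_oddMap_of_abs_sub_lt ha hr0 hr ?_⟩
    rw [abs_lt]
    constructor <;> linarith

lemma exists_tendsto_iterate_oddMap_of_eight_lt (h8 : 8 < a) (y : ℝ) :
    ∃ L, oddMap a L = L ∧ Tendsto (fun n => (oddMap a)^[n] y) atTop (𝓝 L) := by
  have ha : 0 < a := by linarith
  obtain ⟨r, hr0, hr⟩ := exists_pos_oddMap_eq_self h8
  obtain ⟨M, hM⟩ := exists_abs_iterate_oddMap_lt ha hr0 hr (y := y)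
  obtain ⟨L, hL, hlim⟩ := exists_tendsto_iterate_oddMap_of_abs_lt ha hr0 hr hM
  refine ⟨L, hL, (tendsto_add_atTop_iff_nat M).1 ?_⟩
  simpa only [← iterate_add_apply] using hlim

lemma exists_tendsto_iterate_oddMap (ha : 0 < a) (y : ℝ) :
    ∃ L, oddMap a L = L ∧ Tendsto (fun n => (oddMap a)^[n] y) atTop (𝓝 L) := by
  rcases le_or_gt a 8 with h8 | h8
  · exact ⟨0, oddMap_zero a, tendsto_iterate_oddMap_zero ha h8 y⟩
  · exact exists_tendsto_iterate_oddMap_of_eight_lt h8 y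

end OddMap

/-- For `a > 0` and the symmetric map `f_a = f_{a,1/2}`, the trajectory of
every `x ∈ (0,1)` converges to a fixed point or a period-2 orbit of `f_a` in
`(0,1)`: the even and odd subsequences of iterates converge to points
`p, q ∈ (0,1)` with `f_a(p) = q` and `f_a(q) = p`. -/
theorem stmt_9 (a : ℝ) (ha : 0 < a) (x : ℝ) (hx : x ∈ Set.Ioo (0 : ℝ) 1) :
    ∃ p q : ℝ, p ∈ Set.Ioo (0 : ℝ) 1 ∧ q ∈ Set.Ioo (0 : ℝ) 1 ∧
      chaosMap a (1 / 2) p = q ∧ chaosMap a (1 / 2) q = p ∧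
      Filter.Tendsto (fun n : ℕ => (chaosMap a (1 / 2))^[2 * n] x)
        Filter.atTop (nhds p) ∧
      Filter.Tendsto (fun n : ℕ => (chaosMap a (1 / 2))^[2 * n + 1] x)
        Filter.atTop (nhds q) := by
  obtain ⟨y, rfl⟩ : x ∈ range sigmoid := by rwa [range_sigmoid]
  obtain ⟨L, hL, hlim⟩ := exists_tendsto_iterate_oddMap ha y
  have h2n : Tendsto (fun n : ℕ => 2 * n) atTop atTop := tendsto_id.const_mul_atTop' two_pos
  refine ⟨sigmoid L, sigmoid (-L), ⟨sigmoid_pos L, sigmoid_lt_one L⟩,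
    ⟨sigmoid_pos (-L), sigmoid_lt_one (-L)⟩, ?_, ?_, ?_, ?_⟩
  · rw [chaosMap_sigmoid, hL]
  · rw [chaosMap_sigmoid, oddMap_neg, hL, neg_neg]
  · simp only [chaosMap_iterate_two_mul_sigmoid]
    exact (continuous_sigmoid.tendsto L).comp (hlim.comp h2n)
  · simp only [chaosMap_iterate_two_mul_add_one_sigmoid]
    exact (continuous_sigmoid.tendsto (-L)).comp
      (hlim.comp ((tendsto_add_atTop_nat 1).comp h2n)).neg
end

section
/- If a > 8, then there exists a unique σ_a ∈ (0,1/2) with f_a(σ_a) = 1 − σ_a (so {σ_a, 1 − σ_a} is a periodic orbit of f_a of period 2), and for every x ∈ (0,1) outside a countable set, the even and odd subsequences of iterates of x converge to σ_a and 1 − σ_a (in one of the two orders); every x in the exceptional countable set satisfies f_a^n(x) = 1/2 for some n. -/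
/-!
In logit coordinates `x = sigmoid y` the map `f_a` becomes `y ↦ -H y` with the odd map
`H y = a * sigmoid y - a / 2 - y` (`H = logitMap a`), so
`f_a^[n] (sigmoid y) = sigmoid ((-1)^n H^[n] y)` and the period-two points of `f_a` are the
fixed points of `H`. For `a > 8` the map `H` is unimodal on `[0, ∞)`, with a positive zero `u`
and a unique positive fixed point `p`, and it has no 2-cycles: `H y = z`, `H z = y` forces
`sigmoid y = sigmoid z`. Outside `[-u, u]` the map `H` shrinks `|y|` by at least `u`, so an orbit
avoiding `0` enters `(-u, u)`, where it keeps its sign and, up to sign, stays in a compact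
interval `I ⊂ (0, u)`. The set `Ω` of cluster points of the orbit is compact with `H Ω = Ω`;
comparing the extreme points of `Ω` by unimodality and the absence of 2-cycles (in the form
`y < H (H y)` on `(0, p)`) shows `Ω = {p}`. The exceptional points are those whose orbit hits
`0`, that is, whose `f_a`-orbit hits `1/2`; there are countably many because `H` is
finite-to-one.
-/

open Real Set Filter Topology

lemma quasiconcaveOn_Ici_of_monotoneOn_of_antitoneOn {g : ℝ → ℝ} {l c : ℝ}
    (hmono : MonotoneOn g (Icc l c)) (hanti : AntitoneOn g (Ici c)) :
    QuasiconcaveOn ℝ (Ici l) g := by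
  intro r
  rw [convex_iff_ordConnected]
  refine ⟨fun x hx y hy z hz => ⟨le_trans hx.1 hz.1, ?_⟩⟩
  rcases le_total z c with hzc | hcz
  · exact hx.2.trans (hmono ⟨hx.1, hz.1.trans hzc⟩ ⟨hx.1.trans hz.1, hzc⟩ hz.1)
  · exact hy.2.trans (hanti hcz (hcz.trans hz.2) hz.2)

lemma QuasiconcaveOn.min_le_of_mem_Icc {s : Set ℝ} {g : ℝ → ℝ} (hg : QuasiconcaveOn ℝ s g)
    {x y z : ℝ} (hx : x ∈ s) (hz : z ∈ s) (hy : y ∈ Icc x z) : min (g x) (g z) ≤ g y := by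
  have hconv := convex_iff_ordConnected.mp (hg (min (g x) (g z)))
  exact (hconv.out ⟨hx, min_le_left _ _⟩ ⟨hz, min_le_right _ _⟩ hy).2

lemma exists_mapClusterPt_eq_of_comp {X Y ι : Type*} [TopologicalSpace X] [TopologicalSpace Y]
    [T2Space Y] {K : Set X} (hK : IsCompact K) {F : Filter ι} {w : ι → X}
    (hw : ∀ᶠ i in F, w i ∈ K) {g : X → Y} (hg : Continuous g) {z : Y}
    (hz : MapClusterPt z F (g ∘ w)) :
    ∃ v, MapClusterPt v F w ∧ g v = z := by
  obtain ⟨U, hUF, hUz⟩ := mapClusterPt_iff_ultrafilter.mp hz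
  obtain ⟨v, -, hUv⟩ := hK.ultrafilter_le_nhds (U.map w) (le_principal_iff.mpr (hUF hw))
  have hwv : Tendsto w U (𝓝 v) := hUv
  exact ⟨v, mapClusterPt_iff_ultrafilter.mpr ⟨U, hUF, hwv⟩,
    tendsto_nhds_unique ((hg.tendsto v).comp hwv) hUz⟩

lemma subset_singleton_of_mapsTo_of_surjOn {g : ℝ → ℝ} {l r p : ℝ} {Ω : Set ℝ}
    (hΩ : IsCompact Ω) (hΩK : Ω ⊆ Icc l r) (hmaps : MapsTo g Ω Ω) (hsurj : SurjOn g Ω Ω)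
    (hq : QuasiconcaveOn ℝ (Icc l r) g) (hfix : g p = p)
    (hlt : ∀ y ∈ Icc l r, y < p → y < g y) (hgt : ∀ y ∈ Icc l r, p < y → g y < y)
    (hlt₂ : ∀ y ∈ Icc l r, y < p → y < g (g y)) :
    Ω ⊆ {p} := by
  intro z hz
  obtain ⟨lo, hlo⟩ := hΩ.exists_isLeast ⟨z, hz⟩
  obtain ⟨hi, hhi⟩ := hΩ.exists_isGreatest ⟨z, hz⟩
  suffices hlohi : lo = hi by
    have hglo : g lo = lo :=
      le_antisymm ((hhi.2 (hmaps hlo.1)).trans_eq hlohi.symm) (hlo.2 (hmaps hlo.1))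
    have hzlo : z = lo := le_antisymm ((hhi.2 hz).trans_eq hlohi.symm) (hlo.2 hz)
    rcases lt_trichotomy lo p with h | h | h
    · exact absurd hglo (hlt lo (hΩK hlo.1) h).ne'
    · exact hzlo.trans h
    · exact absurd hglo (hgt lo (hΩK hlo.1) h).ne
  -- If `lo < hi`: `hi = g v` with `v < p`, `lo = g v'` with `p ≤ v'`, quasiconcavity on
  -- `[lo, hi] ∋ v'` forces `g hi = lo`, and then `v < g (g v) = lo` contradicts `lo ≤ v`.
  by_contra hne
  obtain ⟨v, hvΩ, hv⟩ := hsurj hhi.1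
  obtain ⟨v', hv'Ω, hv'⟩ := hsurj hlo.1
  have hvp : v ≤ p := not_lt.mp fun h => (hgt v (hΩK hvΩ) h).not_ge (hv ▸ hhi.2 hvΩ)
  have hv'p : p ≤ v' := not_lt.mp fun h => (hlt v' (hΩK hv'Ω) h).not_ge (hv' ▸ hlo.2 hv'Ω)
  have hvp' : v < p := by
    refine hvp.lt_of_ne fun h => hne ?_
    have hhip : hi = p := by rw [← hv, h, hfix]
    rw [← hv', le_antisymm (hhip ▸ hhi.2 hv'Ω) hv'p, hfix, hhip]
  have hlop : lo < p := (hlo.2 hvΩ).trans_lt hvp'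
  have hghi : g hi = lo := by
    have hmin := hq.min_le_of_mem_Icc (hΩK hlo.1) (hΩK hhi.1) ⟨hlo.2 hv'Ω, hhi.2 hv'Ω⟩
    rw [hv', min_le_iff] at hmin
    refine le_antisymm (hmin.resolve_left ?_) (hlo.2 (hmaps hhi.1))
    exact (hlt lo (hΩK hlo.1) hlop).not_ge
  have := hlt₂ v (hΩK hvΩ) hvp'
  rw [hv, hghi] at this
  exact this.not_ge (hlo.2 hvΩ)

lemma tendsto_iterate_of_quasiconcaveOn {g : ℝ → ℝ} (hg : Continuous g) {l r p x : ℝ}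
    (horbit : ∀ n, g^[n] x ∈ Icc l r) (hq : QuasiconcaveOn ℝ (Icc l r) g) (hfix : g p = p)
    (hlt : ∀ y ∈ Icc l r, y < p → y < g y) (hgt : ∀ y ∈ Icc l r, p < y → g y < y)
    (hlt₂ : ∀ y ∈ Icc l r, y < p → y < g (g y)) :
    Tendsto (fun n => g^[n] x) atTop (𝓝 p) := by
  set w : ℕ → ℝ := fun n => g^[n] x
  have hK : IsCompact (Icc l r) := isCompact_Icc
  have hw : ∀ᶠ n in atTop, w n ∈ Icc l r := Eventually.of_forall horbit
  have hshift : g ∘ w = w ∘ (· + 1) := funext fun n => (Function.iterate_succ_apply' g n x).symm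
  set Ω := {z | MapClusterPt z atTop w}
  have hΩK : Ω ⊆ Icc l r := fun z hz => isClosed_Icc.closure_subset
    (mem_closure_iff_clusterPt.mpr (ClusterPt.mono hz (tendsto_principal.mpr hw)))
  have hmaps : MapsTo g Ω Ω := fun z hz =>
    (hshift ▸ hz.continuousAt_comp hg.continuousAt).of_comp (tendsto_add_atTop_nat 1)
  have hsurj : SurjOn g Ω Ω := fun z hz => by
    have : MapClusterPt z atTop (g ∘ w) := by
      rwa [hshift, MapClusterPt, ← Filter.map_map, map_add_atTop_eq_nat]
    exact exists_mapClusterPt_eq_of_comp hK hw hg this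
  have hΩp := subset_singleton_of_mapsTo_of_surjOn
    (hK.of_isClosed_subset isClosed_setOfPred_clusterPt hΩK) hΩK hmaps hsurj hq hfix hlt hgt hlt₂
  exact hK.tendsto_nhds_of_unique_mapClusterPt hw fun z _ hz => hΩp hz

lemma exists_pos_mapsTo_Icc {g : ℝ → ℝ} {p β : ℝ} (hg : ContinuousOn g (Icc p β))
    (hpβ : p ≤ β) (hpos : ∀ y ∈ Icc p β, 0 < g y) (hle : ∀ y, 0 < y → g y ≤ β)
    (hlt : ∀ y, 0 < y → y < p → y < g y) :
    ∃ ν, 0 < ν ∧ ∀ δ ∈ Ioc 0 ν, MapsTo g (Icc δ β) (Icc δ β) := by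
  obtain ⟨m, hm, hmin⟩ := isCompact_Icc.exists_isMinOn (nonempty_Icc.mpr hpβ) hg
  refine ⟨g m, hpos m hm, fun δ hδ y hy => ⟨?_, hle y (hδ.1.trans_le hy.1)⟩⟩
  rcases lt_or_ge y p with hyp | hpy
  · exact hy.1.trans (hlt y (hδ.1.trans_le hy.1) hyp).le
  · exact hδ.2.trans (hmin ⟨hpy, hy.2⟩)

lemma exists_abs_iterate_lt {g : ℝ → ℝ} {u : ℝ} (hu : 0 < u)
    (hg : ∀ y, u ≤ |y| → |g y| ≤ |y| - u) (y : ℝ) : ∃ N, |g^[N] y| < u := by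
  by_contra! hfar
  have hdecay : ∀ n : ℕ, |g^[n] y| ≤ |y| - n * u := by
    intro n
    induction n with
    | zero => simp
    | succ n ih =>
      rw [Function.iterate_succ_apply']
      have := hg _ (hfar n)
      push_cast
      linarith
  obtain ⟨n, hn⟩ := exists_nat_gt (|y| / u)
  have := hdecay n
  rw [div_lt_iff₀ hu] at hn
  linarith [abs_nonneg (g^[n] y)]

lemma lt_self_of_one_lt_deriv {φ : ℝ → ℝ} {d r : ℝ} (hφ : Continuous φ) (hφ0 : φ 0 = 0)
    (hd : HasDerivAt φ d 0) (hd1 : 1 < d) (hne : ∀ t ∈ Ioo 0 r, φ t ≠ t) :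
    ∀ t ∈ Ioo 0 r, t < φ t := by
  intro t ht
  have hslope : ∀ᶠ s in 𝓝[>] (0 : ℝ), 1 < s⁻¹ • (φ (0 + s) - φ 0) :=
    hd.tendsto_slope_zero_right.eventually (eventually_gt_nhds hd1)
  obtain ⟨s, hs1, hs0, hst⟩ :=
    (hslope.and (Ioo_mem_nhdsGT ht.1 : ∀ᶠ s in 𝓝[>] (0 : ℝ), s ∈ Ioo 0 t)).exists
  have hφs : s < φ s := by
    simp only [zero_add, hφ0, sub_zero, smul_eq_mul] at hs1
    rwa [lt_inv_mul_iff₀ hs0, mul_one] at hs1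
  by_contra! hφt
  have hφt : φ t < t := lt_of_le_of_ne hφt (hne t ht)
  obtain ⟨z, hz, hz0⟩ := intermediate_value_Ioo' hst.le
    (hφ.sub continuous_id).continuousOn (show (0 : ℝ) ∈ Ioo (φ t - t) (φ s - s) by
      constructor <;> linarith)
  exact hne z ⟨hs0.trans hz.1, hz.2.trans ht.2⟩ (sub_eq_zero.mp hz0)

lemma countable_iUnion_preimage_iterate {α : Type*} {g : α → α}
    (hg : ∀ t : Set α, t.Countable → (g ⁻¹' t).Countable) {t : Set α} (ht : t.Countable) :
    (⋃ n, g^[n] ⁻¹' t).Countable := by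
  refine countable_iUnion fun n => ?_
  induction n with
  | zero => exact ht
  | succ n ih => rw [Function.iterate_succ, preimage_comp]; exact hg _ ih

lemma exists_root_of_strictMonoOn_of_strictAntiOn {F : ℝ → ℝ} {c z : ℝ}
    (hF : ContinuousOn F (Icc c z)) (hF0 : F 0 = 0) (hc : 0 < c)
    (hmono : StrictMonoOn F (Icc 0 c)) (hanti : StrictAntiOn F (Ici c)) (hcz : c ≤ z)
    (hz : F z < 0) :
    ∃ r, c < r ∧ F r = 0 ∧ (∀ y ∈ Ioo 0 r, 0 < F y) ∧ ∀ y, r < y → F y < 0 := by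
  have hFc : 0 < F c := hF0 ▸ hmono ⟨le_rfl, hc.le⟩ ⟨hc.le, le_rfl⟩ hc
  obtain ⟨r, hr, hFr⟩ := intermediate_value_Ioo' hcz hF ⟨hz, hFc⟩
  refine ⟨r, hr.1, hFr, fun y hy => ?_, fun y hy => hFr ▸ hanti hr.1.le (hr.1.trans hy).le hy⟩
  rcases le_or_gt y c with hyc | hcy
  · exact hF0 ▸ hmono ⟨le_rfl, hc.le⟩ ⟨hy.1.le, hyc⟩ hy.1
  · exact hFr ▸ hanti hcy.le hr.1.le hy.2

lemma sigmoid_mul_one_sub_abs (y : ℝ) :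
    sigmoid |y| * (1 - sigmoid |y|) = sigmoid y * (1 - sigmoid y) := by
  rcases abs_choice y with h | h <;> rw [h]
  rw [sigmoid_neg]; ring

lemma strictAntiOn_sigmoid_mul_one_sub :
    StrictAntiOn (fun y => sigmoid y * (1 - sigmoid y)) (Ici 0) := by
  intro u hu v _ huv
  have hsu : 2⁻¹ ≤ sigmoid u := sigmoid_zero ▸ sigmoid_le hu
  nlinarith [sigmoid_lt huv, sigmoid_lt_one v]

lemma tendsto_sigmoid_mul_one_sub_atTop :
    Tendsto (fun y => sigmoid y * (1 - sigmoid y)) atTop (𝓝 0) := by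
  simpa using
    tendsto_sigmoid_atTop.mul ((tendsto_const_nhds (x := (1 : ℝ))).sub tendsto_sigmoid_atTop)

lemma exists_sign_change_sigmoid_mul_one_sub {a b : ℝ} (hb : 0 < b) (hab : 4 * b < a) :
    ∃ c, 0 < c ∧ (∀ y, |y| < c → b < a * (sigmoid y * (1 - sigmoid y))) ∧
      ∀ y, c < |y| → a * (sigmoid y * (1 - sigmoid y)) < b := by
  have ha : 0 < a := by linarith
  have hcont : Continuous fun y => a * (sigmoid y * (1 - sigmoid y)) := by fun_prop
  obtain ⟨T, hT0, hT⟩ := ((eventually_ge_atTop 0).and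
    ((tendsto_sigmoid_mul_one_sub_atTop.const_mul a).eventually
      (eventually_lt_nhds (by simpa using hb)))).exists
  have h0 : b < a * (sigmoid 0 * (1 - sigmoid 0)) := by rw [sigmoid_zero]; linarith
  obtain ⟨c, hc, hcb⟩ := intermediate_value_Ioo' hT0 hcont.continuousOn ⟨hT, h0⟩
  simp only at hcb
  refine ⟨c, hc.1, fun y hy => ?_, fun y hy => ?_⟩
  · rw [← hcb, ← sigmoid_mul_one_sub_abs y]
    exact mul_lt_mul_of_pos_left
      (strictAntiOn_sigmoid_mul_one_sub (abs_nonneg y) hc.1.le hy) ha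
  · rw [← hcb, ← sigmoid_mul_one_sub_abs y]
    exact mul_lt_mul_of_pos_left
      (strictAntiOn_sigmoid_mul_one_sub hc.1.le (abs_nonneg y) hy) ha

namespace ChaosMap

-- `b = 1` gives `logitMap a`; `b = 2` gives `logitMap a - id`, whose sign locates its fixed point.
noncomputable def tiltedSigmoid (a b y : ℝ) : ℝ := a * sigmoid y - a / 2 - b * y

lemma continuous_tiltedSigmoid (a b : ℝ) : Continuous (tiltedSigmoid a b) := by
  unfold tiltedSigmoid; fun_prop

lemma hasDerivAt_tiltedSigmoid (a b y : ℝ) :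
    HasDerivAt (tiltedSigmoid a b) (a * (sigmoid y * (1 - sigmoid y)) - b) y := by
  have h := (((hasDerivAt_sigmoid y).const_mul a).sub_const (a / 2)).sub
    ((hasDerivAt_id' y).const_mul b)
  rwa [mul_one] at h

lemma exists_unimodal_tiltedSigmoid {a b : ℝ} (hb : 0 < b) (hab : 4 * b < a) :
    ∃ c, 0 < c ∧ StrictMonoOn (tiltedSigmoid a b) (Icc (-c) c) ∧
      StrictAntiOn (tiltedSigmoid a b) (Ici c) ∧
      StrictAntiOn (tiltedSigmoid a b) (Iic (-c)) := by
  obtain ⟨c, hc, hinner, houter⟩ := exists_sign_change_sigmoid_mul_one_sub hb hab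
  have hderiv y := (hasDerivAt_tiltedSigmoid a b y).deriv
  have hcont {s} : ContinuousOn (tiltedSigmoid a b) s :=
    (continuous_tiltedSigmoid a b).continuousOn
  refine ⟨c, hc, ?_, ?_, ?_⟩
  · refine strictMonoOn_of_deriv_pos (convex_Icc _ _) hcont fun y hy => ?_
    rw [interior_Icc] at hy
    rw [hderiv, sub_pos]
    exact hinner y (abs_lt.mpr hy)
  · refine strictAntiOn_of_deriv_neg (convex_Ici _) hcont fun y hy => ?_
    rw [interior_Ici] at hy
    rw [hderiv, sub_neg]
    exact houter y (hy.trans_le (le_abs_self y))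
  · refine strictAntiOn_of_deriv_neg (convex_Iic _) hcont fun y hy => ?_
    rw [interior_Iic] at hy
    rw [hderiv, sub_neg]
    exact houter y (lt_abs.mpr (Or.inr (lt_neg.mpr hy)))

lemma tiltedSigmoid_neg_of_le {a b y : ℝ} (ha : 0 < a) (hy : a ≤ b * y) :
    tiltedSigmoid a b y < 0 := by
  unfold tiltedSigmoid
  nlinarith [sigmoid_lt_one y]

lemma exists_unimodal_root_tiltedSigmoid {a b : ℝ} (hb : 0 < b) (hab : 4 * b < a) :
    ∃ c r, 0 < c ∧ c < r ∧ StrictMonoOn (tiltedSigmoid a b) (Icc (-c) c) ∧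
      StrictAntiOn (tiltedSigmoid a b) (Ici c) ∧ StrictAntiOn (tiltedSigmoid a b) (Iic (-c)) ∧
      tiltedSigmoid a b r = 0 ∧ (∀ y ∈ Ioo 0 r, 0 < tiltedSigmoid a b y) ∧
      ∀ y, r < y → tiltedSigmoid a b y < 0 := by
  obtain ⟨c, hc, hmono, hanti, hanti'⟩ := exists_unimodal_tiltedSigmoid hb hab
  have hF0 : tiltedSigmoid a b 0 = 0 := by simp [tiltedSigmoid, sigmoid_zero]; ring
  have hz := tiltedSigmoid_neg_of_le (by linarith) (show a ≤ b * (c + a / b) by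
    rw [mul_add, mul_div_cancel₀ _ hb.ne']; nlinarith)
  obtain ⟨r, hcr, hr⟩ := exists_root_of_strictMonoOn_of_strictAntiOn
    (continuous_tiltedSigmoid a b).continuousOn hF0 hc
    (hmono.mono (Icc_subset_Icc_left (neg_nonpos.mpr hc.le))) hanti
    (le_add_of_nonneg_right (div_pos (by linarith) hb).le) hz
  exact ⟨c, r, hc, hcr, hmono, hanti, hanti', hr⟩

noncomputable def logitMap (a : ℝ) : ℝ → ℝ := tiltedSigmoid a 1

lemma logitMap_apply (a y : ℝ) : logitMap a y = a * sigmoid y - a / 2 - y := by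
  simp [logitMap, tiltedSigmoid]

lemma continuous_logitMap (a : ℝ) : Continuous (logitMap a) := continuous_tiltedSigmoid a 1

lemma logitMap_neg (a y : ℝ) : logitMap a (-y) = -logitMap a y := by
  simp only [logitMap_apply, sigmoid_neg]; ring

lemma logitMap_zero (a : ℝ) : logitMap a 0 = 0 := by
  simp only [logitMap_apply, sigmoid_zero]; ring

lemma iterate_logitMap_neg (a y : ℝ) (n : ℕ) : (logitMap a)^[n] (-y) = -(logitMap a)^[n] y :=
  (Function.Commute.iterate_left (g := Neg.neg) (fun y => logitMap_neg a y) n) y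

variable {a : ℝ}

lemma logitMap_add_self_lt (ha : 0 < a) {y z : ℝ} (hyz : y < z) :
    logitMap a y + y < logitMap a z + z := by
  simp only [logitMap_apply]
  nlinarith [sigmoid_lt hyz]

lemma eq_of_logitMap_eq_of_logitMap_eq (ha : a ≠ 0) {p q : ℝ} (hpq : logitMap a p = q)
    (hqp : logitMap a q = p) : p = q := by
  rw [logitMap_apply] at hpq hqp
  exact sigmoid_injective (mul_left_cancel₀ ha (by linarith))

lemma hasDerivAt_logitMap_zero (a : ℝ) : HasDerivAt (logitMap a) (a / 4 - 1) 0 :=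
  (hasDerivAt_tiltedSigmoid a 1 0).congr_deriv (by rw [sigmoid_zero]; ring)

lemma chaosMap_sigmoid (a y : ℝ) :
    chaosMap a (1 / 2) (sigmoid y) = sigmoid (-logitMap a y) := by
  have hden : sigmoid y + (1 - sigmoid y) * exp (a * (sigmoid y - 1 / 2)) =
      sigmoid y * (1 + exp (logitMap a y)) := by
    rw [← sigmoid_neg, ← sigmoid_mul_rexp_neg, logitMap_apply,
      show a * sigmoid y - a / 2 - y = -y + a * (sigmoid y - 1 / 2) by ring, exp_add]
    ring
  rw [chaosMap, hden, div_mul_cancel_left₀ (sigmoid_pos y).ne', sigmoid_def, neg_neg]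

lemma chaosMap_iterate_sigmoid (a y : ℝ) (n : ℕ) :
    (chaosMap a (1 / 2))^[n] (sigmoid y) = sigmoid ((-1) ^ n * (logitMap a)^[n] y) := by
  induction n with
  | zero => simp
  | succ n ih =>
    rw [Function.iterate_succ_apply', ih, chaosMap_sigmoid, Function.iterate_succ_apply']
    rcases neg_one_pow_eq_or ℝ n with h | h <;> simp [h, pow_succ, logitMap_neg]

lemma chaosMap_sigmoid_eq_one_sub_iff (a y : ℝ) :
    chaosMap a (1 / 2) (sigmoid y) = 1 - sigmoid y ↔ logitMap a y = y := by
  rw [chaosMap_sigmoid, ← sigmoid_neg, sigmoid_inj, neg_inj]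

structure LogitMapShape (a : ℝ) where
  crit : ℝ
  root : ℝ
  fixPt : ℝ
  crit_pos : 0 < crit
  crit_lt_root : crit < root
  strictMonoOn_Icc : StrictMonoOn (logitMap a) (Icc (-crit) crit)
  strictAntiOn_Ici : StrictAntiOn (logitMap a) (Ici crit)
  strictAntiOn_Iic : StrictAntiOn (logitMap a) (Iic (-crit))
  apply_root : logitMap a root = 0
  pos_of_mem_Ioo : ∀ y ∈ Ioo 0 root, 0 < logitMap a y
  neg_of_root_lt : ∀ y, root < y → logitMap a y < 0
  fixPt_pos : 0 < fixPt
  apply_fixPt : logitMap a fixPt = fixPt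
  lt_apply_of_mem_Ioo : ∀ y ∈ Ioo 0 fixPt, y < logitMap a y
  apply_lt_of_fixPt_lt : ∀ y, fixPt < y → logitMap a y < y

lemma nonempty_logitMapShape (ha : 8 < a) : Nonempty (LogitMapShape a) := by
  obtain ⟨c, u, hc, hcu, hmono, hanti, hanti', hu, hpos, hneg⟩ :=
    exists_unimodal_root_tiltedSigmoid one_pos (by linarith : 4 * 1 < a)
  obtain ⟨c', p, hc', hc'p, -, -, -, hp, hlt, hgt⟩ :=
    exists_unimodal_root_tiltedSigmoid two_pos (by linarith : 4 * 2 < a)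
  have hsub y : tiltedSigmoid a 2 y = logitMap a y - y := by
    rw [logitMap_apply, tiltedSigmoid]; ring
  exact ⟨⟨c, u, p, hc, hcu, hmono, hanti, hanti', hu, hpos, hneg, hc'.trans hc'p,
    by linarith [hsub p], fun y hy => by linarith [hsub y, hlt y hy],
    fun y hy => by linarith [hsub y, hgt y hy]⟩⟩

namespace LogitMapShape

lemma root_pos (S : LogitMapShape a) : 0 < S.root := S.crit_pos.trans S.crit_lt_root

lemma apply_le_apply_crit (S : LogitMapShape a) {y : ℝ} (hy : 0 ≤ y) :
    logitMap a y ≤ logitMap a S.crit := by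
  rcases le_total y S.crit with h | h
  · exact S.strictMonoOn_Icc.monotoneOn ⟨by linarith [S.crit_pos], h⟩
      ⟨by linarith [S.crit_pos], le_rfl⟩ h
  · exact S.strictAntiOn_Ici.antitoneOn (mem_Ici.mpr le_rfl) h h

lemma quasiconcaveOn (S : LogitMapShape a) : QuasiconcaveOn ℝ (Ici 0) (logitMap a) :=
  quasiconcaveOn_Ici_of_monotoneOn_of_antitoneOn
    (S.strictMonoOn_Icc.monotoneOn.mono (Icc_subset_Icc_left (neg_nonpos.mpr S.crit_pos.le)))
    S.strictAntiOn_Ici.antitoneOn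

lemma apply_lt_root (S : LogitMapShape a) (ha : 0 < a) {y : ℝ} (hy : y ∈ Ico 0 S.root) :
    logitMap a y < S.root := by
  have := logitMap_add_self_lt ha hy.2
  rw [S.apply_root] at this
  linarith [hy.1]

lemma abs_apply_le (S : LogitMapShape a) (ha : 0 < a) {y : ℝ} (hy : S.root ≤ |y|) :
    |logitMap a y| ≤ |y| - S.root := by
  have key : ∀ y, S.root ≤ y → |logitMap a y| ≤ y - S.root := fun y hy => by
    have hnonpos : logitMap a y ≤ 0 := by
      rcases hy.eq_or_lt with h | h
      · rw [← h, S.apply_root]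
      · exact (S.neg_of_root_lt y h).le
    have hadd : S.root ≤ logitMap a y + y := by
      rcases hy.eq_or_lt with h | h
      · rw [← h, S.apply_root, zero_add]
      · simpa [S.apply_root] using (logitMap_add_self_lt ha h).le
    rw [abs_of_nonpos hnonpos]
    linarith
  rcases abs_choice y with h | h
  · rw [h] at hy ⊢
    exact key y hy
  · rw [h] at hy ⊢
    rw [← abs_neg, ← logitMap_neg]
    exact key (-y) hy

lemma eq_fixPt (S : LogitMapShape a) {y : ℝ} (hy : 0 < y) (hfix : logitMap a y = y) :
    y = S.fixPt := by
  rcases lt_trichotomy y S.fixPt with h | h | h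
  · exact absurd hfix (S.lt_apply_of_mem_Ioo y ⟨hy, h⟩).ne'
  · exact h
  · exact absurd hfix (S.apply_lt_of_fixPt_lt y h).ne

-- The slope `(a / 4 - 1) ^ 2` of `H ∘ H` at `0` exceeds `1` exactly when `a > 8`.
lemma lt_apply_apply (S : LogitMapShape a) (ha : 8 < a) :
    ∀ y ∈ Ioo 0 S.fixPt, y < logitMap a (logitMap a y) := by
  have hd : HasDerivAt (logitMap a ∘ logitMap a) ((a / 4 - 1) * (a / 4 - 1)) 0 :=
    ((logitMap_zero a).symm ▸ hasDerivAt_logitMap_zero a).comp 0 (hasDerivAt_logitMap_zero a)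
  refine lt_self_of_one_lt_deriv ((continuous_logitMap a).comp (continuous_logitMap a))
    (by simp [logitMap_zero]) hd (by nlinarith) fun y hy h2 => ?_
  have := eq_of_logitMap_eq_of_logitMap_eq (by positivity) rfl h2
  exact (S.lt_apply_of_mem_Ioo y hy).ne this

lemma countable_preimage (S : LogitMapShape a) {t : Set ℝ} (ht : t.Countable) :
    (logitMap a ⁻¹' t).Countable := by
  have piece : ∀ s, InjOn (logitMap a) s → (logitMap a ⁻¹' t ∩ s).Countable := fun s hs =>
    (mapsTo_preimage _ t).mono_left inter_subset_left |>.countable_of_injOn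
      (hs.mono inter_subset_right) ht
  refine ((piece _ S.strictAntiOn_Iic.injOn).union ((piece _ S.strictMonoOn_Icc.injOn).union
    (piece _ S.strictAntiOn_Ici.injOn))).mono fun y hy => ?_
  rcases le_or_gt y (-S.crit) with h | h
  · exact Or.inl ⟨hy, h⟩
  rcases le_or_gt y S.crit with h' | h'
  · exact Or.inr (Or.inl ⟨hy, h.le, h'⟩)
  · exact Or.inr (Or.inr ⟨hy, h'.le⟩)

lemma tendsto_iterate_of_mem_Ioo (S : LogitMapShape a) (ha : 8 < a) {x : ℝ}
    (hx : x ∈ Ioo 0 S.root) :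
    Tendsto (fun n => (logitMap a)^[n] x) atTop (𝓝 S.fixPt) := by
  have ha0 : 0 < a := by linarith
  set β := logitMap a S.crit
  have hβ : β < S.root := S.apply_lt_root ha0 ⟨S.crit_pos.le, S.crit_lt_root⟩
  have hpβ : S.fixPt ≤ β := S.apply_fixPt ▸ S.apply_le_apply_crit S.fixPt_pos.le
  obtain ⟨ν, hν, hmaps⟩ := exists_pos_mapsTo_Icc (continuous_logitMap a).continuousOn hpβ
    (fun y hy => S.pos_of_mem_Ioo y ⟨S.fixPt_pos.trans_le hy.1, hy.2.trans_lt hβ⟩)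
    (fun y hy => S.apply_le_apply_crit hy.le)
    (fun y hy hyp => S.lt_apply_of_mem_Ioo y ⟨hy, hyp⟩)
  have hx₁ := S.pos_of_mem_Ioo x hx
  set δ := min (logitMap a x) ν
  have hδ : 0 < δ := lt_min hx₁ hν
  have hK : Icc δ β ⊆ Ici 0 := fun y hy => hδ.le.trans hy.1
  have hlim := tendsto_iterate_of_quasiconcaveOn (continuous_logitMap a)
    (fun n => (hmaps δ ⟨hδ, min_le_right _ _⟩).iterate n
      ⟨min_le_left _ _, S.apply_le_apply_crit hx.1.le⟩)
    (Convex.quasiconcaveOn_restrict S.quasiconcaveOn hK (convex_Icc δ β)) S.apply_fixPt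
    (fun y hy hyp => S.lt_apply_of_mem_Ioo y ⟨hδ.trans_le hy.1, hyp⟩)
    (fun y _ hyp => S.apply_lt_of_fixPt_lt y hyp)
    (fun y hy hyp => S.lt_apply_apply ha y ⟨hδ.trans_le hy.1, hyp⟩)
  simp only [← Function.iterate_succ_apply] at hlim
  exact (tendsto_add_atTop_iff_nat 1).mp hlim

lemma tendsto_iterate (S : LogitMapShape a) (ha : 8 < a) {y : ℝ}
    (hy : ∀ n, (logitMap a)^[n] y ≠ 0) :
    Tendsto (fun n => (logitMap a)^[n] y) atTop (𝓝 S.fixPt) ∨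
      Tendsto (fun n => (logitMap a)^[n] y) atTop (𝓝 (-S.fixPt)) := by
  obtain ⟨N, hN⟩ := exists_abs_iterate_lt S.root_pos (fun y => S.abs_apply_le (by linarith)) y
  set z := (logitMap a)^[N] y
  have hshift {q : ℝ} (h : Tendsto (fun n => (logitMap a)^[n] z) atTop (𝓝 q)) :
      Tendsto (fun n => (logitMap a)^[n] y) atTop (𝓝 q) :=
    (tendsto_add_atTop_iff_nat N).mp (by simpa only [z, ← Function.iterate_add_apply] using h)
  rcases (hy N).lt_or_gt with hz | hz
  · right
    have hlim := S.tendsto_iterate_of_mem_Ioo ha (x := -z) ⟨neg_pos.mpr hz, by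
      linarith [neg_abs_le z]⟩
    exact hshift (by simpa [iterate_logitMap_neg] using hlim.neg)
  · exact Or.inl (hshift (S.tendsto_iterate_of_mem_Ioo ha ⟨hz, (le_abs_self z).trans_lt hN⟩))

lemma eq_sigmoid_neg_fixPt (S : LogitMapShape a) {x : ℝ} (hx : x ∈ Ioo 0 (1 / 2))
    (hfx : chaosMap a (1 / 2) x = 1 - x) : x = sigmoid (-S.fixPt) := by
  obtain ⟨y, rfl⟩ : x ∈ range sigmoid := range_sigmoid ▸ ⟨hx.1, hx.2.trans (by norm_num)⟩
  have hy : y < 0 := sigmoid_lt_iff.mp (by rw [sigmoid_zero]; linarith [hx.2])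
  have hfix := (chaosMap_sigmoid_eq_one_sub_iff a y).mp hfx
  rw [← S.eq_fixPt (neg_pos.mpr hy) (by rw [logitMap_neg, hfix]), neg_neg]

end LogitMapShape

lemma tendsto_chaosMap_iterate_even_odd {y q : ℝ}
    (h : Tendsto (fun n => (logitMap a)^[n] y) atTop (𝓝 q)) :
    Tendsto (fun n : ℕ => (chaosMap a (1 / 2))^[2 * n] (sigmoid y)) atTop (𝓝 (sigmoid q)) ∧
      Tendsto (fun n : ℕ => (chaosMap a (1 / 2))^[2 * n + 1] (sigmoid y)) atTop
        (𝓝 (sigmoid (-q))) := by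
  have heven : (fun n : ℕ => (chaosMap a (1 / 2))^[2 * n] (sigmoid y)) =
      sigmoid ∘ (fun n => (logitMap a)^[n] y) ∘ (2 * ·) := funext fun n => by
    rw [chaosMap_iterate_sigmoid, (even_two_mul n).neg_one_pow, one_mul]; rfl
  have hodd : (fun n : ℕ => (chaosMap a (1 / 2))^[2 * n + 1] (sigmoid y)) =
      sigmoid ∘ (fun n => -(logitMap a)^[n] y) ∘ (2 * · + 1) := funext fun n => by
    rw [chaosMap_iterate_sigmoid, (odd_two_mul_add_one n).neg_one_pow, neg_one_mul]; rfl
  rw [heven, hodd]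
  exact ⟨(continuous_sigmoid.tendsto q).comp
      (h.comp (tendsto_atTop_mono (fun n => show n ≤ 2 * n by omega) tendsto_id)),
    (continuous_sigmoid.tendsto (-q)).comp
      (h.neg.comp (tendsto_atTop_mono (fun n => show n ≤ 2 * n + 1 by omega) tendsto_id))⟩

end ChaosMap

open ChaosMap

/-- If `a > 8` then there is a unique `σ_a ∈ (0,1/2)` with
`f_a(σ_a) = 1 - σ_a`, and for all `x ∈ (0,1)` outside a countable set the
even and odd subsequences of iterates converge to `σ_a` and `1 - σ_a` (in one
of the two orders), while every point of the countable exceptional set is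
mapped to `1/2` by some iterate. -/
theorem stmt_11 (a : ℝ) (ha : 8 < a) :
    ∃ σ : ℝ, (σ ∈ Set.Ioo (0 : ℝ) (1 / 2) ∧ chaosMap a (1 / 2) σ = 1 - σ) ∧
      (∀ σ' : ℝ, σ' ∈ Set.Ioo (0 : ℝ) (1 / 2) → chaosMap a (1 / 2) σ' = 1 - σ' →
        σ' = σ) ∧
      ∃ C : Set ℝ, C.Countable ∧ C ⊆ Set.Ioo (0 : ℝ) 1 ∧
        (∀ x ∈ Set.Ioo (0 : ℝ) 1 \ C,
          (Filter.Tendsto (fun n : ℕ => (chaosMap a (1 / 2))^[2 * n] x)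
              Filter.atTop (nhds σ) ∧
            Filter.Tendsto (fun n : ℕ => (chaosMap a (1 / 2))^[2 * n + 1] x)
              Filter.atTop (nhds (1 - σ))) ∨
          (Filter.Tendsto (fun n : ℕ => (chaosMap a (1 / 2))^[2 * n] x)
              Filter.atTop (nhds (1 - σ)) ∧
            Filter.Tendsto (fun n : ℕ => (chaosMap a (1 / 2))^[2 * n + 1] x)
              Filter.atTop (nhds σ))) ∧
        (∀ x ∈ C, ∃ n : ℕ, (chaosMap a (1 / 2))^[n] x = 1 / 2) := by
  obtain ⟨S⟩ := nonempty_logitMapShape ha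
  have hσ : sigmoid S.fixPt = 1 - sigmoid (-S.fixPt) := by rw [sigmoid_neg]; ring
  refine ⟨sigmoid (-S.fixPt), ⟨⟨sigmoid_pos _, ?_⟩, ?_⟩,
    fun x hx hfx => S.eq_sigmoid_neg_fixPt hx hfx, sigmoid '' ⋃ n, (logitMap a)^[n] ⁻¹' {0},
    ((countable_iUnion_preimage_iterate fun _ => S.countable_preimage)
      (countable_singleton 0)).image _,
    fun x ⟨y, _, hy⟩ => hy ▸ ⟨sigmoid_pos y, sigmoid_lt_one y⟩, ?_, ?_⟩
  · simpa [sigmoid_zero] using sigmoid_lt (neg_neg_of_pos S.fixPt_pos)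
  · rw [chaosMap_sigmoid_eq_one_sub_iff, logitMap_neg, S.apply_fixPt]
  · rintro x ⟨hx, hxC⟩
    obtain ⟨y, rfl⟩ : x ∈ range sigmoid := range_sigmoid ▸ hx
    have hy : ∀ n, (logitMap a)^[n] y ≠ 0 := fun n hn => hxC ⟨y, mem_iUnion.mpr ⟨n, hn⟩, rfl⟩
    rcases S.tendsto_iterate ha hy with h | h
    · right
      simpa [hσ] using tendsto_chaosMap_iterate_even_odd h
    · left
      simpa [hσ] using tendsto_chaosMap_iterate_even_odd h
  · rintro x ⟨y, hy, rfl⟩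
    obtain ⟨n, hn⟩ := mem_iUnion.mp hy
    exact ⟨n, by rw [chaosMap_iterate_sigmoid, show (logitMap a)^[n] y = 0 from hn, mul_zero,
      sigmoid_zero]; norm_num⟩
end

section
/- For every b ∈ (0,1) with b ≠ 1/2, there exists a_b > 0 such that for every a > a_b the map f_{a,b} has a periodic point of period 3, i.e., a point x ∈ [0,1] with f_{a,b}^3(x) = x and f_{a,b}(x) ≠ x. -/
open Real Set Filter Topology Function Finset

lemma tendsto_inv_one_add_mul_exp_of_atTop {α : Type*} {l : Filter α} {c : ℝ} (hc : 0 < c)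
    {g : α → ℝ} (hg : Tendsto g l atTop) :
    Tendsto (fun t => (1 + c * exp (g t))⁻¹) l (𝓝 0) :=
  tendsto_inv_atTop_zero.comp <|
    tendsto_atTop_add_const_left _ 1 <| (tendsto_exp_atTop.comp hg).const_mul_atTop hc

lemma tendsto_inv_one_add_mul_exp_of_atBot {α : Type*} {l : Filter α} (c : ℝ)
    {g : α → ℝ} (hg : Tendsto g l atBot) :
    Tendsto (fun t => (1 + c * exp (g t))⁻¹) l (𝓝 1) := by
  simpa using (((tendsto_exp_atBot.comp hg).const_mul c).const_add 1).inv₀ (by simp)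

namespace chaosMap

variable {a b x y : ℝ}

lemma denom_pos (hx : x ∈ Icc (0 : ℝ) 1) : 0 < x + (1 - x) * exp (a * (x - b)) := by
  rcases hx.1.eq_or_lt with rfl | hx0
  · simpa using exp_pos _
  · nlinarith [exp_pos (a * (x - b)), hx.2]

lemma mapsTo_Icc : MapsTo (chaosMap a b) (Icc 0 1) (Icc 0 1) := fun x hx => by
  have hd := denom_pos (a := a) (b := b) hx
  refine ⟨div_nonneg hx.1 hd.le, (div_le_one hd).2 ?_⟩
  nlinarith [exp_pos (a * (x - b)), hx.2]

lemma mapsTo_Ioo : MapsTo (chaosMap a b) (Ioo 0 1) (Ioo 0 1) := fun x hx => by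
  have hd := denom_pos (a := a) (b := b) (Ioo_subset_Icc_self hx)
  refine ⟨div_pos hx.1 hd, (div_lt_one hd).2 ?_⟩
  nlinarith [exp_pos (a * (x - b)), hx.2]

lemma continuousOn : ContinuousOn (chaosMap a b) (Icc 0 1) :=
  continuousOn_id.div (by fun_prop) fun _ hx => (denom_pos hx).ne'

lemma one_sub (hy : y ∈ Icc (0 : ℝ) 1) :
    chaosMap a b (1 - y) = 1 - chaosMap a (1 - b) y := by
  have hd := denom_pos (a := a) (b := 1 - b) hy
  have hE : exp (a * (1 - y - b)) = (exp (a * (y - (1 - b))))⁻¹ := by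
    rw [← exp_neg]; ring_nf
  have hd' := denom_pos (a := a) (b := b) (x := 1 - y) ⟨by linarith [hy.2], by linarith [hy.1]⟩
  simp only [chaosMap]
  rw [eq_sub_iff_add_eq, div_add_div _ _ hd'.ne' hd.ne', div_eq_one_iff_eq (mul_pos hd' hd).ne', hE]
  field_simp
  ring

lemma iterate_one_sub (n : ℕ) (hy : y ∈ Icc (0 : ℝ) 1) :
    (chaosMap a b)^[n] (1 - y) = 1 - (chaosMap a (1 - b))^[n] y := by
  induction n generalizing y with
  | zero => rfl
  | succ n ih => rw [iterate_succ_apply, iterate_succ_apply, one_sub hy, ih (mapsTo_Icc hy)]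

lemma eq_inv_one_add (hx : x ≠ 0) :
    chaosMap a b x = (1 + (x⁻¹ - 1) * exp (a * (x - b)))⁻¹ := by
  rw [chaosMap, ← inv_div]
  congr 1
  field_simp

noncomputable def orbitExcess (a b : ℝ) (n : ℕ) (x : ℝ) : ℝ :=
  ∑ k ∈ range n, ((chaosMap a b)^[k] x - b)

lemma orbitExcess_one : orbitExcess a b 1 x = x - b := by
  simp [orbitExcess]

lemma orbitExcess_succ (n : ℕ) :
    orbitExcess a b (n + 1) x = orbitExcess a b n x + ((chaosMap a b)^[n] x - b) :=
  sum_range_succ _ n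

lemma inv_iterate_sub_one (hx : x ∈ Ioo (0 : ℝ) 1) (n : ℕ) :
    ((chaosMap a b)^[n] x)⁻¹ - 1 = (x⁻¹ - 1) * exp (a * orbitExcess a b n x) := by
  induction n with
  | zero => simp [orbitExcess]
  | succ n ih =>
    have hn := ((mapsTo_Ioo (a := a) (b := b)).iterate n hx).1.ne'
    rw [iterate_succ_apply', eq_inv_one_add hn, inv_inv, add_sub_cancel_left, ih, orbitExcess_succ,
      mul_add, exp_add, mul_assoc]

lemma iterate_eq_inv (hx : x ∈ Ioo (0 : ℝ) 1) (n : ℕ) :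
    (chaosMap a b)^[n] x = (1 + (x⁻¹ - 1) * exp (a * orbitExcess a b n x))⁻¹ := by
  rw [← inv_iterate_sub_one hx, add_sub_cancel, inv_inv]

lemma iterate_lt_self_iff (ha : 0 < a) (hx : x ∈ Ioo (0 : ℝ) 1) (n : ℕ) :
    (chaosMap a b)^[n] x < x ↔ 0 < orbitExcess a b n x := by
  have hodds : 0 < x⁻¹ - 1 := sub_pos.2 (one_lt_inv₀ hx.1 |>.2 hx.2)
  rw [← inv_lt_inv₀ hx.1 ((mapsTo_Ioo (a := a) (b := b)).iterate n hx).1,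
    ← sub_lt_sub_iff_right 1, inv_iterate_sub_one hx, lt_mul_iff_one_lt_right hodds,
    one_lt_exp_iff, mul_pos_iff_of_pos_left ha]

lemma self_lt_iterate_iff (ha : 0 < a) (hx : x ∈ Ioo (0 : ℝ) 1) (n : ℕ) :
    x < (chaosMap a b)^[n] x ↔ orbitExcess a b n x < 0 := by
  have hodds : 0 < x⁻¹ - 1 := sub_pos.2 (one_lt_inv₀ hx.1 |>.2 hx.2)
  rw [← inv_lt_inv₀ ((mapsTo_Ioo (a := a) (b := b)).iterate n hx).1 hx.1,
    ← sub_lt_sub_iff_right 1, inv_iterate_sub_one hx, mul_lt_iff_lt_one_right hodds,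
    exp_lt_one_iff, mul_neg_iff]
  simp [ha, ha.not_gt]

lemma tendsto_orbitExcess_succ {l : Filter ℝ} {n : ℕ} {s y : ℝ}
    (hS : Tendsto (fun a => orbitExcess a b n x) l (𝓝 s))
    (hf : Tendsto (fun a => (chaosMap a b)^[n] x) l (𝓝 y)) :
    Tendsto (fun a => orbitExcess a b (n + 1) x) l (𝓝 (s + (y - b))) := by
  simpa only [orbitExcess_succ] using hS.add (hf.sub_const b)

lemma tendsto_iterate_of_orbitExcess_pos (hx : x ∈ Ioo (0 : ℝ) 1) {n : ℕ} {s : ℝ}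
    (hS : Tendsto (fun a => orbitExcess a b n x) atTop (𝓝 s)) (hs : 0 < s) :
    Tendsto (fun a => (chaosMap a b)^[n] x) atTop (𝓝 0) := by
  simp only [iterate_eq_inv hx]
  exact tendsto_inv_one_add_mul_exp_of_atTop (sub_pos.2 (one_lt_inv₀ hx.1 |>.2 hx.2))
    (tendsto_id.atTop_mul_pos hs hS)

lemma tendsto_iterate_of_orbitExcess_neg (hx : x ∈ Ioo (0 : ℝ) 1) {n : ℕ} {s : ℝ}
    (hS : Tendsto (fun a => orbitExcess a b n x) atTop (𝓝 s)) (hs : s < 0) :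
    Tendsto (fun a => (chaosMap a b)^[n] x) atTop (𝓝 1) := by
  simp only [iterate_eq_inv hx]
  exact tendsto_inv_one_add_mul_exp_of_atBot _ (tendsto_id.atTop_mul_neg hs hS)

lemma eventually_orbitExcess_three_neg {q : ℝ} (hq : 2 * b < q) (hq3 : q < 3 * b) (hq1 : q < 1) :
    ∀ᶠ a in atTop, orbitExcess a b 3 q < 0 := by
  have hqI : q ∈ Ioo (0 : ℝ) 1 := ⟨by linarith, hq1⟩
  have h1 : Tendsto (fun a => orbitExcess a b 1 q) atTop (𝓝 (q - b)) := by
    simp only [orbitExcess_one, tendsto_const_nhds]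
  have h2 := tendsto_orbitExcess_succ h1 (tendsto_iterate_of_orbitExcess_pos hqI h1 (by linarith))
  have h3 := tendsto_orbitExcess_succ h2 (tendsto_iterate_of_orbitExcess_pos hqI h2 (by linarith))
  exact h3.eventually (gt_mem_nhds (by linarith))

lemma eventually_orbitExcess_three_pos {p : ℝ} (hp : b < p) (hp2 : p < 2 * b) (hb : b < 1 / 2) :
    ∀ᶠ a in atTop, 0 < orbitExcess a b 3 p := by
  have hpI : p ∈ Ioo (0 : ℝ) 1 := ⟨by linarith, by linarith⟩
  have h1 : Tendsto (fun a => orbitExcess a b 1 p) atTop (𝓝 (p - b)) := by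
    simp only [orbitExcess_one, tendsto_const_nhds]
  have h2 := tendsto_orbitExcess_succ h1 (tendsto_iterate_of_orbitExcess_pos hpI h1 (by linarith))
  have h3 := tendsto_orbitExcess_succ h2 (tendsto_iterate_of_orbitExcess_neg hpI h2 (by linarith))
  exact h3.eventually (lt_mem_nhds (by linarith))

lemma not_isFixedPt_of_lt (ha : 0 < a) (hx : x ∈ Ioo (0 : ℝ) 1) (hbx : b < x) :
    ¬IsFixedPt (chaosMap a b) x :=
  ((iterate_lt_self_iff ha hx 1).2 (orbitExcess_one ▸ sub_pos.2 hbx)).ne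

lemma isPeriodicPt_one_sub_iff {n : ℕ} (hy : y ∈ Icc (0 : ℝ) 1) :
    IsPeriodicPt (chaosMap a b) n (1 - y) ↔ IsPeriodicPt (chaosMap a (1 - b)) n y := by
  rw [IsPeriodicPt, IsFixedPt, iterate_one_sub n hy, sub_right_inj]
  rfl

lemma eventually_exists_period_three_of_lt_half (hb0 : 0 < b) (hb : b < 1 / 2) :
    ∀ᶠ a in atTop, ∃ x ∈ Icc (0 : ℝ) 1,
      IsPeriodicPt (chaosMap a b) 3 x ∧ ¬IsFixedPt (chaosMap a b) x := by
  obtain ⟨p, hbp, hp⟩ := exists_between (by linarith : b < 2 * b)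
  obtain ⟨q, hq, hq'⟩ :=
    exists_between (lt_min (by linarith : 2 * b < 3 * b) (by linarith : 2 * b < 1))
  have hpq : p < q := hp.trans hq
  have hq1 : q < 1 := hq'.trans_le (min_le_right _ _)
  filter_upwards [eventually_gt_atTop 0, eventually_orbitExcess_three_pos hbp hp hb,
    eventually_orbitExcess_three_neg hq (hq'.trans_le (min_le_left _ _)) hq1]
    with a ha hpa hqa
  have hpI : p ∈ Ioo (0 : ℝ) 1 := ⟨by linarith, by linarith⟩
  have hqI : q ∈ Ioo (0 : ℝ) 1 := ⟨by linarith, hq1⟩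
  have hsub : Icc p q ⊆ Icc 0 1 := Icc_subset_Icc hpI.1.le hq1.le
  obtain ⟨x, hx, hper⟩ := exists_mem_uIcc_isFixedPt
    ((continuousOn.iterate mapsTo_Icc 3).mono (uIcc_of_ge hpq.le ▸ hsub))
    ((self_lt_iterate_iff ha hqI 3).2 hqa).le ((iterate_lt_self_iff ha hpI 3).2 hpa).le
  rw [uIcc_of_ge hpq.le] at hx
  exact ⟨x, hsub hx, hper, not_isFixedPt_of_lt ha ⟨by linarith [hx.1], by linarith [hx.2]⟩
    (by linarith [hx.1])⟩

lemma eventually_exists_period_three (hb : b ∈ Ioo (0 : ℝ) 1) (hb2 : b ≠ 1 / 2) :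
    ∀ᶠ a in atTop, ∃ x ∈ Icc (0 : ℝ) 1,
      IsPeriodicPt (chaosMap a b) 3 x ∧ ¬IsFixedPt (chaosMap a b) x := by
  rcases hb2.lt_or_gt with hb2 | hb2
  · exact eventually_exists_period_three_of_lt_half hb.1 hb2
  · filter_upwards [eventually_exists_period_three_of_lt_half (b := 1 - b) (by linarith [hb.2])
      (by linarith)]
      with a ⟨x, hx, hper, hfix⟩
    refine ⟨1 - x, ⟨by linarith [hx.2], by linarith [hx.1]⟩, ?_, ?_⟩
    · exact (isPeriodicPt_one_sub_iff hx).2 hper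
    · exact fun h => hfix ((isPeriodicPt_one_sub_iff (n := 1) hx).1 h)

end chaosMap

/-- For every `b ∈ (0,1)` with `b ≠ 1/2` there is `a_b > 0` such that for
every `a > a_b` the map `f_{a,b}` has a periodic point of period 3. -/
theorem stmt_12 (b : ℝ) (hb : b ∈ Set.Ioo (0 : ℝ) 1) (hb2 : b ≠ 1 / 2) :
    ∃ a_b : ℝ, 0 < a_b ∧ ∀ a : ℝ, a_b < a →
      ∃ x ∈ Set.Icc (0 : ℝ) 1, (chaosMap a b)^[3] x = x ∧ chaosMap a b x ≠ x := by
  obtain ⟨A, hA⟩ := eventually_atTop.1 (chaosMap.eventually_exists_period_three hb hb2)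
  exact ⟨max A 1, by positivity, fun a ha => hA a (le_of_max_le_left ha.le)⟩
end

section
/- For every a > 0 and b ∈ (0,1) there exist a positive integer N and a number κ > 1 such that for every x ∈ [0,1], the product Π_{k=0}^{N-1} λ_{a,b}(f_{a,b}^k(x)) ≥ κ. -/
/-- The transverse eigenvalue
`λ_{a,b}(x) = (1 + a x (1-x)) exp(a(x-b)) / (x + (1-x) exp(a(x-b)))²`. -/
noncomputable def transEig (a b : ℝ) : ℝ → ℝ :=
  fun x => (1 + a * x * (1 - x)) * Real.exp (a * (x - b)) /
    (x + (1 - x) * Real.exp (a * (x - b))) ^ 2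

open Set Real Function Topology

section OrbitProducts

variable {α : Type*} {T : α → α} {S : Set α}

theorem prod_range_iterate_mul_eq {M : Type*} [CommMonoid M] (hT : MapsTo T S S)
    {g u h : α → M} (hgh : ∀ y ∈ S, g y * h y = u y * h (T y)) {x : α} (hx : x ∈ S) (n : ℕ) :
    (∏ k ∈ Finset.range n, g (T^[k] x)) * h x =
      (∏ k ∈ Finset.range n, u (T^[k] x)) * h (T^[n] x) := by
  induction n with
  | zero => simp
  | succ n ih =>
    rw [Finset.prod_range_succ, Finset.prod_range_succ, mul_right_comm, ih, mul_assoc,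
      mul_comm (h _), hgh _ (hT.iterate n hx), ← mul_assoc, iterate_succ_apply']

theorem mul_pow_le_prod_range_iterate {R : Type*} [CommSemiring R] [PartialOrder R]
    [IsOrderedRing R] {g : α → R} (hT : MapsTo T S S) {C m : R} (hC₀ : 0 ≤ C) (hC₁ : C ≤ 1)
    (hm : 0 ≤ m)
    (h : ∀ x ∈ S, m ≤ g x ∨ ∀ n : ℕ, C * m ^ n ≤ ∏ k ∈ Finset.range n, g (T^[k] x)) (n : ℕ) :
    ∀ x ∈ S, C * m ^ n ≤ ∏ k ∈ Finset.range n, g (T^[k] x) := by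
  induction n with
  | zero => intro x _; simpa using hC₁
  | succ n ih =>
    intro x hx
    rcases h x hx with hgx | hgrow
    · have hTx := ih (T x) (hT hx)
      rw [Finset.prod_range_succ', pow_succ, ← mul_assoc]
      simp only [iterate_succ_apply, iterate_zero_apply]
      exact mul_le_mul hTx hgx hm ((mul_nonneg hC₀ (pow_nonneg hm n)).trans hTx)
    · exact hgrow (n + 1)

end OrbitProducts

section ChaosMap

variable {a b x : ℝ}

theorem chaosMap_denom_pos (hx : x ∈ Icc (0 : ℝ) 1) :
    0 < x + (1 - x) * exp (a * (x - b)) := by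
  rcases lt_or_ge 0 (1 - x) with h | h
  · exact add_pos_of_nonneg_of_pos hx.1 (mul_pos h (exp_pos _))
  · exact add_pos_of_pos_of_nonneg (by linarith) (mul_nonneg (sub_nonneg.2 hx.2) (exp_pos _).le)

theorem chaosMap_mapsTo : MapsTo (chaosMap a b) (Icc 0 1) (Icc 0 1) := by
  intro x hx
  have hD := chaosMap_denom_pos (a := a) (b := b) hx
  refine ⟨div_nonneg hx.1 hD.le, (div_le_one hD).2 ?_⟩
  nlinarith [mul_nonneg (sub_nonneg.2 hx.2) (exp_pos (a * (x - b))).le]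

theorem exp_mul_one_sub_sub : exp (a * (1 - x - (1 - b))) = (exp (a * (x - b)))⁻¹ := by
  rw [← exp_neg]
  ring_nf

theorem chaosMap_denom_one_sub :
    1 - x + (1 - (1 - x)) * (exp (a * (x - b)))⁻¹ =
      (x + (1 - x) * exp (a * (x - b))) * (exp (a * (x - b)))⁻¹ := by
  field_simp
  ring

theorem one_sub_chaosMap (hx : x ∈ Icc (0 : ℝ) 1) :
    1 - chaosMap a b x = chaosMap a (1 - b) (1 - x) := by
  have hD := (chaosMap_denom_pos (a := a) (b := b) hx).ne'
  unfold chaosMap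
  rw [exp_mul_one_sub_sub, chaosMap_denom_one_sub]
  field_simp
  ring

theorem one_sub_iterate_chaosMap (hx : x ∈ Icc (0 : ℝ) 1) (k : ℕ) :
    1 - (chaosMap a b)^[k] x = (chaosMap a (1 - b))^[k] (1 - x) := by
  induction k with
  | zero => rfl
  | succ k ih =>
    rw [iterate_succ_apply', iterate_succ_apply', one_sub_chaosMap (chaosMap_mapsTo.iterate k hx),
      ih]

theorem min_le_chaosMap (ha : 0 ≤ a) (hb : 0 ≤ b) (hx : x ∈ Icc (0 : ℝ) 1) :
    min x (b * exp (-a)) ≤ chaosMap a b x := by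
  have hD := chaosMap_denom_pos (a := a) (b := b) hx
  have h1x : 0 ≤ 1 - x := sub_nonneg.2 hx.2
  rcases le_total x b with hxb | hbx
  · have hE : exp (a * (x - b)) ≤ 1 :=
      exp_le_one_iff.2 (mul_nonpos_of_nonneg_of_nonpos ha (sub_nonpos.2 hxb))
    refine (min_le_left _ _).trans (le_div_self hx.1 hD ?_)
    nlinarith [mul_le_mul_of_nonneg_left hE h1x]
  · have hE : exp (a * (x - b)) ≤ exp a := exp_le_exp.2 (by nlinarith)
    have hD' : x + (1 - x) * exp (a * (x - b)) ≤ exp a := by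
      nlinarith [mul_le_mul_of_nonneg_left hE h1x, one_le_exp ha]
    calc min x (b * exp (-a)) ≤ x / exp a := by
          rw [exp_neg, ← div_eq_mul_inv]
          exact (min_le_right _ _).trans (div_le_div_of_nonneg_right hbx (exp_pos a).le)
      _ ≤ chaosMap a b x := div_le_div_of_nonneg_left hx.1 hD hD'

theorem min_le_iterate_chaosMap (ha : 0 ≤ a) (hb : 0 ≤ b) (hx : x ∈ Icc (0 : ℝ) 1) (k : ℕ) :
    min x (b * exp (-a)) ≤ (chaosMap a b)^[k] x := by
  induction k with
  | zero => exact min_le_left _ _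
  | succ k ih =>
    rw [iterate_succ_apply']
    exact (le_min ih (min_le_right _ _)).trans
      (min_le_chaosMap ha hb (chaosMap_mapsTo.iterate k hx))

theorem mul_le_iterate_mul_one_sub (ha : 0 ≤ a) (hb : b ∈ Icc (0 : ℝ) 1) {η : ℝ} (hη : 0 ≤ η)
    (hx : x ∈ Icc η (1 - η)) (k : ℕ) :
    min η (b * exp (-a)) * min η ((1 - b) * exp (-a)) ≤
      (chaosMap a b)^[k] x * (1 - (chaosMap a b)^[k] x) := by
  have hx' : x ∈ Icc (0 : ℝ) 1 := ⟨hη.trans hx.1, by linarith [hx.2]⟩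
  have hlow : min η (b * exp (-a)) ≤ (chaosMap a b)^[k] x :=
    (min_le_min_right _ hx.1).trans (min_le_iterate_chaosMap ha hb.1 hx' k)
  have hhigh : min η ((1 - b) * exp (-a)) ≤ 1 - (chaosMap a b)^[k] x := by
    rw [one_sub_iterate_chaosMap hx']
    exact (min_le_min_right _ (by linarith [hx.2])).trans
      (min_le_iterate_chaosMap ha (sub_nonneg.2 hb.2) ⟨sub_nonneg.2 hx'.2, by linarith [hx'.1]⟩ k)
  exact mul_le_mul hlow hhigh (le_min hη (by have := sub_nonneg.2 hb.2; positivity))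
    (chaosMap_mapsTo.iterate k hx').1

theorem transEig_nonneg (ha : 0 ≤ a) (hx : x ∈ Icc (0 : ℝ) 1) : 0 ≤ transEig a b x := by
  have : 0 ≤ a * x * (1 - x) := mul_nonneg (mul_nonneg ha hx.1) (sub_nonneg.2 hx.2)
  unfold transEig
  positivity

theorem transEig_mul_eq (hx : x ∈ Icc (0 : ℝ) 1) :
    transEig a b x * (x * (1 - x)) =
      (1 + a * (x * (1 - x))) * (chaosMap a b x * (1 - chaosMap a b x)) := by
  have hD := (chaosMap_denom_pos (a := a) (b := b) hx).ne'
  unfold transEig chaosMap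
  field_simp
  ring

theorem transEig_one_sub (hx : x ∈ Icc (0 : ℝ) 1) :
    transEig a (1 - b) (1 - x) = transEig a b x := by
  have hD := (chaosMap_denom_pos (a := a) (b := b) hx).ne'
  unfold transEig
  rw [exp_mul_one_sub_sub, chaosMap_denom_one_sub]
  field_simp
  ring

theorem transEig_zero : transEig a b 0 = exp (a * b) := by
  simp [transEig, pow_two, ← exp_neg]

theorem continuousOn_transEig : ContinuousOn (transEig a b) (Icc 0 1) :=
  ContinuousOn.div (by fun_prop) (by fun_prop) fun _ hx ↦
    pow_ne_zero 2 (chaosMap_denom_pos hx).ne'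

theorem exists_pos_forall_lt_transEig {m : ℝ} (hm : m < transEig a b 0) :
    ∃ η > 0, ∀ y ∈ Icc (0 : ℝ) 1, y < η → m < transEig a b y := by
  have hev : ∀ᶠ y in 𝓝[Icc 0 1] 0, m < transEig a b y :=
    (continuousOn_transEig 0 ⟨le_rfl, zero_le_one⟩).eventually_const_lt hm
  rw [nhdsWithin_Icc_eq_nhdsGE zero_lt_one] at hev
  obtain ⟨η, hη, hsub⟩ := mem_nhdsGE_iff_exists_Ico_subset.1 hev
  exact ⟨η, hη, fun y hy hyη ↦ hsub ⟨hy.1, hyη⟩⟩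

theorem exists_boundary_layer (ha : 0 < a) (hb : b ∈ Ioo (0 : ℝ) 1) :
    ∃ η > 0, η ≤ 1 / 2 ∧ ∃ m₀ > 1,
      ∀ y ∈ Icc (0 : ℝ) 1, y ∉ Icc η (1 - η) → m₀ ≤ transEig a b y := by
  obtain ⟨m₀, hm₀, hm₀_lt⟩ := exists_between (lt_min (one_lt_exp_iff.2 (mul_pos ha hb.1))
    (one_lt_exp_iff.2 (mul_pos ha (sub_pos.2 hb.2))))
  obtain ⟨η₀, hη₀, h₀⟩ := exists_pos_forall_lt_transEig (a := a) (b := b) (m := m₀)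
    (by rw [transEig_zero]; exact hm₀_lt.trans_le (min_le_left _ _))
  obtain ⟨η₁, hη₁, h₁⟩ := exists_pos_forall_lt_transEig (a := a) (b := 1 - b) (m := m₀)
    (by rw [transEig_zero]; exact hm₀_lt.trans_le (min_le_right _ _))
  have hη₀' : min (min η₀ η₁) (1 / 2) ≤ η₀ := (min_le_left _ _).trans (min_le_left _ _)
  have hη₁' : min (min η₀ η₁) (1 / 2) ≤ η₁ := (min_le_left _ _).trans (min_le_right _ _)
  refine ⟨min (min η₀ η₁) (1 / 2), by positivity, min_le_right _ _, m₀, hm₀, fun y hy hyI ↦ ?_⟩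
  rcases not_and_or.1 hyI with hlow | hhigh
  · exact (h₀ y hy (by linarith [not_le.1 hlow])).le
  · rw [← transEig_one_sub hy]
    exact (h₁ (1 - y) ⟨sub_nonneg.2 hy.2, by linarith [hy.1]⟩ (by linarith [not_le.1 hhigh])).le

theorem mul_pow_le_prod_transEig (ha : 0 ≤ a) (hx : x ∈ Icc (0 : ℝ) 1) {β : ℝ} (hβ : 0 ≤ β)
    (horbit : ∀ k, β ≤ (chaosMap a b)^[k] x * (1 - (chaosMap a b)^[k] x)) (n : ℕ) :
    4 * β * (1 + a * β) ^ n ≤ ∏ k ∈ Finset.range n, transEig a b ((chaosMap a b)^[k] x) := by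
  have hprod := prod_range_iterate_mul_eq (g := transEig a b)
    (u := fun y ↦ 1 + a * (y * (1 - y))) (h := fun y ↦ y * (1 - y)) chaosMap_mapsTo
    (fun _ hy ↦ transEig_mul_eq hy) hx n
  have hgrowth : (1 + a * β) ^ n ≤
      ∏ k ∈ Finset.range n, (1 + a * ((chaosMap a b)^[k] x * (1 - (chaosMap a b)^[k] x))) := by
    simpa using Finset.prod_le_prod (s := Finset.range n) (f := fun _ ↦ 1 + a * β)
      (fun _ _ ↦ by positivity) fun k _ ↦ by gcongr; exact horbit k
  have hnonneg : 0 ≤ ∏ k ∈ Finset.range n, transEig a b ((chaosMap a b)^[k] x) :=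
    Finset.prod_nonneg fun k _ ↦ transEig_nonneg ha (chaosMap_mapsTo.iterate k hx)
  have hφ : x * (1 - x) ≤ 1 / 4 := by nlinarith [sq_nonneg (x - 1 / 2)]
  have hlower := mul_le_mul hgrowth (horbit n) hβ ((by positivity : (0 : ℝ) ≤ _).trans hgrowth)
  nlinarith [mul_le_mul_of_nonneg_left hφ hnonneg]

theorem exists_mul_pow_le_prod_transEig (ha : 0 < a) (hb : b ∈ Ioo (0 : ℝ) 1) :
    ∃ C > 0, C ≤ 1 ∧ ∃ m > 1, ∀ n : ℕ, ∀ x ∈ Icc (0 : ℝ) 1,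
      C * m ^ n ≤ ∏ k ∈ Finset.range n, transEig a b ((chaosMap a b)^[k] x) := by
  obtain ⟨η, hη, hη_half, m₀, hm₀, hlayer⟩ := exists_boundary_layer ha hb
  have hb₀ := hb.1
  have hb₁ := sub_pos.2 hb.2
  set β := min η (b * exp (-a)) * min η ((1 - b) * exp (-a))
  have hβ : 0 < β := by positivity
  have hβ_le : 4 * β ≤ 1 := by
    nlinarith [mul_le_mul (min_le_left η (b * exp (-a))) (min_le_left η ((1 - b) * exp (-a)))
      (by positivity) hη.le]
  set m := min m₀ (1 + a * β)
  have hm : 1 < m := lt_min hm₀ (lt_add_of_pos_right 1 (mul_pos ha hβ))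
  refine ⟨4 * β, by positivity, hβ_le, m, hm,
    mul_pow_le_prod_range_iterate chaosMap_mapsTo (by positivity) hβ_le (by positivity)
      fun x hx ↦ ?_⟩
  by_cases hxI : x ∈ Icc η (1 - η)
  · refine Or.inr fun n ↦ le_trans ?_ (mul_pow_le_prod_transEig ha.le hx hβ.le
      (mul_le_iterate_mul_one_sub ha.le (Ioo_subset_Icc_self hb) hη.le hxI) n)
    gcongr
    exact min_le_right _ _
  · exact Or.inl ((min_le_left _ _).trans (hlayer x hx hxI))

end ChaosMap

/-- For every `a > 0` and `b ∈ (0,1)` there exist a positive integer `N` and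
`κ > 1` such that for every `x ∈ [0,1]`,
`Π_{k<N} λ_{a,b}(f_{a,b}^k(x)) ≥ κ`. -/
theorem stmt_15 (a b : ℝ) (ha : 0 < a) (hb : b ∈ Set.Ioo (0 : ℝ) 1) :
    ∃ N : ℕ, 0 < N ∧ ∃ κ : ℝ, 1 < κ ∧
      ∀ x ∈ Set.Icc (0 : ℝ) 1,
        κ ≤ ∏ k ∈ Finset.range N, transEig a b ((chaosMap a b)^[k] x) := by
  obtain ⟨C, hC, hC_le, m, hm, hbound⟩ := exists_mul_pow_le_prod_transEig ha hb
  obtain ⟨N, hN⟩ := pow_unbounded_of_one_lt C⁻¹ hm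
  rw [inv_lt_iff_one_lt_mul₀' hC] at hN
  refine ⟨N, Nat.pos_of_ne_zero fun hN₀ ↦ ?_, C * m ^ N, hN, hbound N⟩
  rw [hN₀, pow_zero, mul_one] at hN
  exact hN.not_ge hC_le
end

section
/- For every a > 0 and b ∈ (0,1), if (x,y) ∈ [0,1]² satisfies 0 ≤ y < b < x ≤ 1, then the sequence of iterates F_{a,b}^n(x,y) converges to (1,0) as n → ∞; moreover, the first coordinates form a strictly increasing sequence and the second coordinates a strictly decreasing sequence (for (x,y) with 0 < y < b < x < 1). -/
/-!
Each coordinate of `F_{a,b}` moves its argument `u` so that its odds `(1 - u) / u` get multiplied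
by `exp t`, where `t` is `a` times the signed distance of the other coordinate from `b`.
The box `[x, 1] × [0, y]` is invariant when `y < b < x`, so along the orbit the first coordinate
always has odds shrinking by at least the factor `exp (a (y - b)) < 1`, and symmetrically for
`1 - y`; geometric decay of the odds gives the limit `(1, 0)`.
-/

/-- The two-dimensional map `F_{a,b}`. -/
noncomputable def chaosMap2 (a b : ℝ) : ℝ × ℝ → ℝ × ℝ :=
  fun p => (p.1 / (p.1 + (1 - p.1) * Real.exp (a * (p.2 - b))),
            p.2 / (p.2 + (1 - p.2) * Real.exp (a * (p.1 - b))))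

open Set Filter Topology Real

/-- In logit coordinates this is the translation `logit u ↦ logit u - t`. -/
noncomputable def logitShift (t u : ℝ) : ℝ := u / (u + (1 - u) * exp t)

theorem chaosMap2_apply (a b : ℝ) (p : ℝ × ℝ) :
    chaosMap2 a b p = (logitShift (a * (p.2 - b)) p.1, logitShift (a * (p.1 - b)) p.2) :=
  rfl

section LogitShift

variable {t u : ℝ}

theorem logitShift_denom_pos (hu : u ∈ Icc (0 : ℝ) 1) : 0 < u + (1 - u) * exp t := by
  rcases hu.1.eq_or_lt with rfl | hu0
  · simpa using exp_pos t
  · nlinarith [exp_pos t, hu.2]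

theorem one_sub_logitShift (hu : u ∈ Icc (0 : ℝ) 1) :
    1 - logitShift t u = logitShift (-t) (1 - u) := by
  have hD := (logitShift_denom_pos (t := t) hu).ne'
  have hE := (exp_pos t).ne'
  have hD' : 1 - u + (1 - (1 - u)) * (exp t)⁻¹ = (u + (1 - u) * exp t) / exp t := by
    field_simp
    ring
  unfold logitShift
  rw [exp_neg, hD']
  field_simp
  ring

theorem odds_logitShift (hu : u ∈ Ioc (0 : ℝ) 1) :
    (1 - logitShift t u) / logitShift t u = exp t * ((1 - u) / u) := by
  have hD := (logitShift_denom_pos (t := t) (Ioc_subset_Icc_self hu)).ne'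
  have hu0 := hu.1.ne'
  unfold logitShift
  field_simp
  ring

theorem le_logitShift_of_nonpos (hu : u ∈ Icc (0 : ℝ) 1) (ht : t ≤ 0) :
    u ≤ logitShift t u ∧ logitShift t u ≤ 1 := by
  have hD := logitShift_denom_pos (t := t) hu
  have hE : exp t ≤ 1 := exp_le_one_iff.mpr ht
  unfold logitShift
  constructor
  · rw [le_div_iff₀ hD]
    nlinarith [mul_nonneg hu.1 (mul_nonneg (sub_nonneg.mpr hu.2) (sub_nonneg.mpr hE))]
  · rw [div_le_one hD]
    nlinarith [hu.2, exp_pos t]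

theorem logitShift_le_of_nonneg (hu : u ∈ Icc (0 : ℝ) 1) (ht : 0 ≤ t) :
    0 ≤ logitShift t u ∧ logitShift t u ≤ u := by
  have hu' : 1 - u ∈ Icc (0 : ℝ) 1 := ⟨by linarith [hu.2], by linarith [hu.1]⟩
  have h := le_logitShift_of_nonpos hu' (neg_nonpos.mpr ht)
  rw [← one_sub_logitShift hu] at h
  constructor <;> linarith [h.1, h.2]

theorem lt_logitShift_of_neg (hu : u ∈ Ioo (0 : ℝ) 1) (ht : t < 0) :
    u < logitShift t u ∧ logitShift t u < 1 := by
  have hD := logitShift_denom_pos (t := t) (Ioo_subset_Icc_self hu)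
  have hE : exp t < 1 := exp_lt_one_iff.mpr ht
  have h1u : 0 < 1 - u := sub_pos.mpr hu.2
  unfold logitShift
  constructor
  · rw [lt_div_iff₀ hD]
    nlinarith [mul_pos (mul_pos hu.1 h1u) (sub_pos.mpr hE)]
  · rw [div_lt_one hD]
    nlinarith [mul_pos h1u (exp_pos t)]

end LogitShift

section Orbit

variable {u t : ℕ → ℝ}

theorem tendsto_one_of_logitShift {τ : ℝ} (hτ : τ < 0) (ht : ∀ n, t n ≤ τ)
    (hu0 : u 0 ∈ Ioc (0 : ℝ) 1) (hu : ∀ n, u (n + 1) = logitShift (t n) (u n)) :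
    Tendsto u atTop (𝓝 1) := by
  have hmem : ∀ n, u n ∈ Icc (u 0) 1 := by
    intro n
    induction n with
    | zero => exact ⟨le_rfl, hu0.2⟩
    | succ n ih =>
      have h := le_logitShift_of_nonpos (t := t n) ⟨hu0.1.le.trans ih.1, ih.2⟩
        ((ht n).trans hτ.le)
      rw [hu n]
      exact ⟨ih.1.trans h.1, h.2⟩
  have hpos : ∀ n, 0 < u n := fun n => hu0.1.trans_le (hmem n).1
  have hodds : ∀ n, (1 - u n) / u n ≤ exp τ ^ n * ((1 - u 0) / u 0) := by
    intro n
    induction n with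
    | zero => simp
    | succ n ih =>
      rw [hu n, odds_logitShift ⟨hpos n, (hmem n).2⟩, pow_succ', mul_assoc]
      have hodds_nonneg : 0 ≤ (1 - u n) / u n :=
        div_nonneg (sub_nonneg.mpr (hmem n).2) (hpos n).le
      exact mul_le_mul (exp_le_exp.mpr (ht n)) ih hodds_nonneg (exp_pos τ).le
  have hdecay : Tendsto (fun n => exp τ ^ n * ((1 - u 0) / u 0)) atTop (𝓝 0) := by
    simpa using (tendsto_pow_atTop_nhds_zero_of_lt_one (exp_pos τ).le
      (exp_lt_one_iff.mpr hτ)).mul_const ((1 - u 0) / u 0)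
  have hgap : Tendsto (fun n => 1 - u n) atTop (𝓝 0) :=
    squeeze_zero (fun n => sub_nonneg.mpr (hmem n).2)
      (fun n => (le_div_self (sub_nonneg.mpr (hmem n).2) (hpos n) (hmem n).2).trans (hodds n))
      hdecay
  simpa using hgap.const_sub 1

theorem strictMono_of_logitShift (ht : ∀ n, t n < 0) (hu0 : u 0 ∈ Ioo (0 : ℝ) 1)
    (hu : ∀ n, u (n + 1) = logitShift (t n) (u n)) : StrictMono u := by
  have hmem : ∀ n, u n ∈ Ioo (0 : ℝ) 1 := by
    intro n
    induction n with
    | zero => exact hu0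
    | succ n ih =>
      have h := lt_logitShift_of_neg ih (ht n)
      rw [hu n]
      exact ⟨ih.1.trans h.1, h.2⟩
  exact strictMono_nat_of_lt_succ fun n => hu n ▸ (lt_logitShift_of_neg (hmem n) (ht n)).1

end Orbit

theorem chaosMap2_mapsTo {a b x y : ℝ} (ha : 0 ≤ a) (hb : 0 ≤ b) (hyb : y ≤ b) (hbx : b ≤ x) :
    MapsTo (chaosMap2 a b) (Icc x 1 ×ˢ Icc 0 y) (Icc x 1 ×ˢ Icc 0 y) := by
  rintro ⟨p, q⟩ ⟨⟨hxp, hp1⟩, ⟨hq0, hqy⟩⟩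
  have hp : p ∈ Icc (0 : ℝ) 1 := ⟨by linarith, hp1⟩
  have hq : q ∈ Icc (0 : ℝ) 1 := ⟨hq0, by linarith⟩
  have h₁ :=
    le_logitShift_of_nonpos hp (mul_nonpos_of_nonneg_of_nonpos ha (by linarith : q - b ≤ 0))
  have h₂ := logitShift_le_of_nonneg hq (mul_nonneg ha (by linarith : 0 ≤ p - b))
  exact ⟨⟨hxp.trans h₁.1, h₁.2⟩, ⟨h₂.1, h₂.2.trans hqy⟩⟩

/-- For every `a > 0`, `b ∈ (0,1)` and `(x,y)` with `0 ≤ y < b < x ≤ 1`, the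
trajectory of `(x,y)` under `F_{a,b}` converges to `(1,0)`; moreover if
`0 < y` and `x < 1` the first coordinates strictly increase and the second
coordinates strictly decrease. -/
theorem stmt_16 (a b : ℝ) (ha : 0 < a) (hb : b ∈ Set.Ioo (0 : ℝ) 1)
    (x y : ℝ) (hy0 : 0 ≤ y) (hyb : y < b) (hbx : b < x) (hx1 : x ≤ 1) :
    Filter.Tendsto (fun n : ℕ => (chaosMap2 a b)^[n] (x, y))
      Filter.atTop (nhds ((1 : ℝ), (0 : ℝ))) ∧
    (0 < y → x < 1 →
      StrictMono (fun n : ℕ => ((chaosMap2 a b)^[n] (x, y)).1) ∧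
      StrictAnti (fun n : ℕ => ((chaosMap2 a b)^[n] (x, y)).2)) := by
  set X := fun n : ℕ => ((chaosMap2 a b)^[n] (x, y)).1
  set Y := fun n : ℕ => ((chaosMap2 a b)^[n] (x, y)).2
  have hbox : ∀ n, X n ∈ Icc x 1 ∧ Y n ∈ Icc 0 y := fun n =>
    (chaosMap2_mapsTo ha.le hb.1.le hyb.le hbx.le).iterate n ⟨⟨le_rfl, hx1⟩, ⟨hy0, le_rfl⟩⟩
  have hX : ∀ n, X (n + 1) = logitShift (a * (Y n - b)) (X n) := fun n => by
    simp only [X, Y, Function.iterate_succ_apply', chaosMap2_apply]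
  have hY : ∀ n, 1 - Y (n + 1) = logitShift (-(a * (X n - b))) (1 - Y n) := fun n => by
    simp only [X, Y, Function.iterate_succ_apply', chaosMap2_apply]
    exact one_sub_logitShift ⟨(hbox n).2.1, by linarith [(hbox n).2.2, hb.2]⟩
  have htX : ∀ n, a * (Y n - b) ≤ a * (y - b) := fun n =>
    mul_le_mul_of_nonneg_left (sub_le_sub_right (hbox n).2.2 b) ha.le
  have htY : ∀ n, -(a * (X n - b)) ≤ -(a * (x - b)) := fun n =>
    neg_le_neg (mul_le_mul_of_nonneg_left (sub_le_sub_right (hbox n).1.1 b) ha.le)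
  have hτX : a * (y - b) < 0 := mul_neg_of_pos_of_neg ha (by linarith)
  have hτY : -(a * (x - b)) < 0 := neg_neg_of_pos (mul_pos ha (by linarith))
  have hx0 : 0 < x := hb.1.trans hbx
  have hy1 : 0 < 1 - y := sub_pos.mpr (hyb.trans hb.2)
  refine ⟨?_, fun hy hx => ⟨?_, ?_⟩⟩
  · have hYlim := (tendsto_one_of_logitShift (u := fun n => 1 - Y n) hτY htY
      ⟨hy1, sub_le_self 1 hy0⟩ hY).const_sub 1
    exact (tendsto_one_of_logitShift hτX htX ⟨hx0, hx1⟩ hX).prodMk_nhds (by simpa using hYlim)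
  · exact strictMono_of_logitShift (fun n => (htX n).trans_lt hτX) ⟨hx0, hx⟩ hX
  · intro m n hmn
    exact (sub_lt_sub_iff_left 1).mp (strictMono_of_logitShift (u := fun n => 1 - Y n)
      (fun n => (htY n).trans_lt hτY) ⟨hy1, sub_lt_self 1 hy⟩ hY hmn)
end
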